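/- arXiv:2510.04929 — 7 statements merged into one kernel-verified Lean document; each statement's English description precedes it below -/
import Mathlib

section
/- Let A be a complete normed algebra over ℂ and K1, K2, K3 ∈ A satisfy [K1,K2] = −2·K3, [K3,K1] = 2·K1, [K3,K2] = −2·K2. Then for every real number t with |t| < π/√2, exp(t·(K1 + K2)) = exp(α·K2) · exp(β·K1) · exp(α·K2), where α = tan(t/√2)/√2 and β = sin(√2·t)/√2. (This is the algebraic factorization underlying the factorization exp(−iĤt) = exp(−i·tan(t/2)·p̂²/2)·exp(−i·sin(t)·x̂²/2)·exp(−i·tan(t/2)·p̂²/2) of the quantum harmonic oscillator evolution.) -/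
open NormedSpace

section helpers

variable {A : Type*} [NormedRing A] [NormedAlgebra ℂ A] [CompleteSpace A]

lemma hasDerivAt_exp_real_smul (K : A) {f : ℝ → ℝ} {f' : ℝ} {t : ℝ}
    (hf : HasDerivAt f f' t) :
    HasDerivAt (fun s : ℝ => exp ((f s : ℂ) • K))
      ((f' : ℂ) • (K * exp ((f t : ℂ) • K))) t := by
  have h1 : HasDerivAt (fun u : ℂ => exp (u • K))
      (K * exp (((f t : ℝ) : ℂ) • K)) ((f t : ℝ) : ℂ) :=
    hasDerivAt_exp_smul_const' K _
  exact h1.scomp t hf.ofReal_comp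

lemma exp_comm_self (K : A) (c : ℂ) :
    exp (c • K) * K = K * exp (c • K) :=
  (((Commute.refl K).smul_left c).exp_left).eq

lemma exp_mul_exp_neg (K : A) (c : ℂ) :
    exp (c • K) * exp ((-c) • K) = 1 := by
  rw [← exp_add_of_commute_of_mem_ball (((Commute.refl K).smul_left c).smul_right (-c))
    ((expSeries_radius_eq_top ℂ A).symm ▸ edist_lt_top _ _)
    ((expSeries_radius_eq_top ℂ A).symm ▸ edist_lt_top _ _)]
  simp [← add_smul]

end helpers

section conj

set_option linter.unusedSectionVars false

variable {A : Type*} [NormedRing A] [NormedAlgebra ℂ A] [CompleteSpace A]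

private lemma aux_deriv_zero (Em E P P' K : A) (hK : K * Em = Em * K)
    (hd : P' + (P * K - K * P) = 0) :
    (-(K * Em)) * (P * E) + Em * (P' * E + P * (K * E)) = 0 := by
  have hP' : P' = K * P - P * K := by
    have h : P' = -(P * K - K * P) := eq_neg_of_add_eq_zero_left hd
    rw [h]; noncomm_ring
  rw [hP', hK]; noncomm_ring

lemma conj_exp (K W0 W1 W2 : A)
    (hd : ∀ c : ℂ, (W1 + (2 * c) • W2) +
      ((W0 + c • W1 + c ^ 2 • W2) * K - K * (W0 + c • W1 + c ^ 2 • W2)) = 0)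
    (c : ℝ) :
    (W0 + (c : ℂ) • W1 + ((c : ℂ)) ^ 2 • W2) * exp ((c : ℂ) • K)
      = exp ((c : ℂ) • K) * W0 := by
  set P : ℝ → A := fun c => W0 + (c : ℂ) • W1 + ((c : ℂ)) ^ 2 • W2 with hP
  set φ : ℝ → A :=
    fun c => exp (((-c : ℝ) : ℂ) • K) * (P c * exp ((c : ℂ) • K)) with hφ
  have hone : ∀ x : ℝ, HasDerivAt (fun c : ℝ => ((c : ℝ) : ℂ)) 1 x := fun x =>
    (hasDerivAt_id x).ofReal_comp
  have hder : ∀ c : ℝ, HasDerivAt φ 0 c := by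
    intro c
    have hE : HasDerivAt (fun c : ℝ => exp ((c : ℂ) • K))
        (((1 : ℝ) : ℂ) • (K * exp ((c : ℂ) • K))) c :=
      hasDerivAt_exp_real_smul K (hasDerivAt_id c)
    have hEm : HasDerivAt (fun c : ℝ => exp (((-c : ℝ) : ℂ) • K))
        (((-1 : ℝ) : ℂ) • (K * exp (((-c : ℝ) : ℂ) • K))) c :=
      hasDerivAt_exp_real_smul K ((hasDerivAt_id c).neg)
    have hPd : HasDerivAt P (W1 + (2 * (c : ℂ)) • W2) c := by
      have h1 := (hone c).smul_const W1
      have h2 : HasDerivAt (fun y : ℝ => ((y : ℂ)) ^ 2 • W2) ((2 * (c : ℂ)) • W2) c := by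
        have h := ((hone c).mul (hone c)).smul_const W2
        simp only [← pow_two] at h
        refine h.congr_deriv ?_
        congr 1; ring
      have h3 := ((hasDerivAt_const c W0).add h1).add h2
      refine h3.congr_deriv ?_
      simp
    have hPE : HasDerivAt (fun c : ℝ => P c * exp ((c : ℂ) • K))
        ((W1 + (2 * (c : ℂ)) • W2) * exp ((c : ℂ) • K)
          + P c * (((1 : ℝ) : ℂ) • (K * exp ((c : ℂ) • K)))) c := hPd.mul hE
    have htot := hEm.mul hPE
    refine htot.congr_deriv ?_
    have hK : K * exp (((-c : ℝ) : ℂ) • K) = exp (((-c : ℝ) : ℂ) • K) * K :=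
      (exp_comm_self K _).symm
    have := aux_deriv_zero (exp (((-c : ℝ) : ℂ) • K)) (exp ((c : ℂ) • K))
      (P c) (W1 + (2 * (c : ℂ)) • W2) K hK (hd (c : ℂ))
    rw [eq_comm, ← this]
    push_cast
    simp [neg_smul, one_smul, neg_mul]
  have hconst : φ c = φ 0 :=
    is_const_of_deriv_eq_zero (fun x => (hder x).differentiableAt)
      (fun x => (hder x).deriv) c 0
  have hφ0 : φ 0 = W0 := by simp [hφ, hP, exp_zero]
  have hc : exp (((-c : ℝ) : ℂ) • K) * (P c * exp ((c : ℂ) • K)) = W0 := by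
    rw [← hφ0]; exact hconst
  have hinv : exp ((c : ℂ) • K) * exp (((-c : ℝ) : ℂ) • K) = 1 := by
    push_cast; exact exp_mul_exp_neg K c
  calc P c * exp ((c : ℂ) • K)
      = (exp ((c : ℂ) • K) * exp (((-c : ℝ) : ℂ) • K))
          * (P c * exp ((c : ℂ) • K)) := by rw [hinv, one_mul]
    _ = exp ((c : ℂ) • K)
          * (exp (((-c : ℝ) : ℂ) • K) * (P c * exp ((c : ℂ) • K))) := by
        rw [mul_assoc]
    _ = exp ((c : ℂ) • K) * W0 := by rw [hc]

end conj

section push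

set_option linter.unusedSectionVars false

variable {A : Type*} [NormedRing A] [NormedAlgebra ℂ A] [CompleteSpace A]

lemma conj_push (K W0 W1 W2 : A)
    (hd : ∀ c : ℂ, (W1 + (2 * c) • W2) +
      ((W0 + c • W1 + c ^ 2 • W2) * K - K * (W0 + c • W1 + c ^ 2 • W2)) = 0)
    (c : ℝ) (z : A) :
    exp ((c : ℂ) • K) * (W0 * z)
      = W0 * (exp ((c : ℂ) • K) * z) + (c : ℂ) • (W1 * (exp ((c : ℂ) • K) * z))
        + ((c : ℂ)) ^ 2 • (W2 * (exp ((c : ℂ) • K) * z)) := by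
  have h := conj_exp K W0 W1 W2 hd c
  calc exp ((c : ℂ) • K) * (W0 * z) = (exp ((c : ℂ) • K) * W0) * z := by
        rw [mul_assoc]
    _ = ((W0 + (c : ℂ) • W1 + ((c : ℂ)) ^ 2 • W2) * exp ((c : ℂ) • K)) * z := by
        rw [h]
    _ = _ := by simp only [add_mul, smul_mul_assoc, mul_assoc]

variable (K1 K2 K3 : A)
    (h12 : K1 * K2 - K2 * K1 = (-2 : ℂ) • K3)
    (h31 : K3 * K1 - K1 * K3 = (2 : ℂ) • K1)
    (h32 : K3 * K2 - K2 * K3 = (-2 : ℂ) • K2)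

include h12 h31 h32

lemma pushE1 (a : ℝ) (z : A) :
    exp ((a : ℂ) • K2) * (K1 * z)
      = K1 * (exp ((a : ℂ) • K2) * z)
        + (a : ℂ) • (((2 : ℂ) • K3) * (exp ((a : ℂ) • K2) * z))
        + ((a : ℂ)) ^ 2 • (((2 : ℂ) • K2) * (exp ((a : ℂ) • K2) * z)) := by
  refine conj_push K2 K1 ((2 : ℂ) • K3) ((2 : ℂ) • K2) (fun c => ?_) a z
  have c12 : K1 * K2 = K2 * K1 + (-2 : ℂ) • K3 := by rw [← h12]; abel
  have c32 : K3 * K2 = K2 * K3 + (-2 : ℂ) • K2 := by rw [← h32]; abel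
  simp only [add_mul, mul_add, smul_mul_assoc, mul_smul_comm]
  simp only [c12, c32]
  module

lemma pushE3 (a : ℝ) (z : A) :
    exp ((a : ℂ) • K2) * (K3 * z)
      = K3 * (exp ((a : ℂ) • K2) * z)
        + (a : ℂ) • (((2 : ℂ) • K2) * (exp ((a : ℂ) • K2) * z))
        + ((a : ℂ)) ^ 2 • ((0 : A) * (exp ((a : ℂ) • K2) * z)) := by
  refine conj_push K2 K3 ((2 : ℂ) • K2) 0 (fun c => ?_) a z
  have c32 : K3 * K2 = K2 * K3 + (-2 : ℂ) • K2 := by rw [← h32]; abel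
  simp only [add_mul, mul_add, smul_mul_assoc, mul_smul_comm]
  simp only [c32]
  simp only [smul_zero, zero_mul, mul_zero, add_zero, zero_smul, smul_add, smul_smul]
  module

lemma pushF2 (b : ℝ) (z : A) :
    exp ((b : ℂ) • K1) * (K2 * z)
      = K2 * (exp ((b : ℂ) • K1) * z)
        + (b : ℂ) • (((-2 : ℂ) • K3) * (exp ((b : ℂ) • K1) * z))
        + ((b : ℂ)) ^ 2 • (((2 : ℂ) • K1) * (exp ((b : ℂ) • K1) * z)) := by
  refine conj_push K1 K2 ((-2 : ℂ) • K3) ((2 : ℂ) • K1) (fun c => ?_) b z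
  have c21 : K2 * K1 = K1 * K2 + (2 : ℂ) • K3 := by
    have h := h12
    rw [sub_eq_iff_eq_add] at h
    rw [h]; module
  have c31 : K3 * K1 = K1 * K3 + (2 : ℂ) • K1 := by rw [← h31]; abel
  simp only [add_mul, mul_add, smul_mul_assoc, mul_smul_comm]
  simp only [c21, c31]
  module

omit h12 h31 h32

lemma pushE2 (a : ℝ) (z : A) :
    exp ((a : ℂ) • K2) * (K2 * z) = K2 * (exp ((a : ℂ) • K2) * z) := by
  rw [← mul_assoc, exp_comm_self, mul_assoc]

end push

section key

set_option linter.unusedSectionVars false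

variable {A : Type*} [NormedRing A] [NormedAlgebra ℂ A] [CompleteSpace A]
variable (K1 K2 K3 : A)
    (h12 : K1 * K2 - K2 * K1 = (-2 : ℂ) • K3)
    (h31 : K3 * K1 - K1 * K3 = (2 : ℂ) • K1)
    (h32 : K3 * K2 - K2 * K3 = (-2 : ℂ) • K2)

include h12 h31 h32 in
lemma key_deriv (a b a' b' : ℝ)
    (e1 : 2*a'*b^2 + b' = 1)
    (e3 : -2*a'*b + 4*a'*a*b^2 + 2*a*b' = 0)
    (e2 : 2*a' - 4*a'*a*b + 4*a'*a^2*b^2 + 2*a^2*b' = 1) :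
    ((a' : ℂ) • (K2 * exp ((a : ℂ) • K2))) * (exp ((b : ℂ) • K1) * exp ((a : ℂ) • K2))
      + exp ((a : ℂ) • K2) *
        (((b' : ℂ) • (K1 * exp ((b : ℂ) • K1))) * exp ((a : ℂ) • K2)
          + exp ((b : ℂ) • K1) * ((a' : ℂ) • (K2 * exp ((a : ℂ) • K2))))
      = (K1 + K2) * (exp ((a : ℂ) • K2) * (exp ((b : ℂ) • K1) * exp ((a : ℂ) • K2))) := by
  have E1 : (2*(a':ℂ)*(b:ℂ)^2 + (b':ℂ) : ℂ) = 1 := by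
    exact_mod_cast congrArg (Complex.ofReal) e1
  have E3 : (-2*(a':ℂ)*(b:ℂ) + 4*(a':ℂ)*(a:ℂ)*(b:ℂ)^2 + 2*(a:ℂ)*(b':ℂ) : ℂ) = 0 := by
    exact_mod_cast congrArg (Complex.ofReal) e3
  have E2 : (2*(a':ℂ) - 4*(a':ℂ)*(a:ℂ)*(b:ℂ) + 4*(a':ℂ)*(a:ℂ)^2*(b:ℂ)^2
      + 2*(a:ℂ)^2*(b':ℂ) : ℂ) = 1 := by
    exact_mod_cast congrArg (Complex.ofReal) e2
  simp only [smul_mul_assoc, mul_smul_comm, mul_add, smul_add, add_mul, mul_assoc]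
  simp only [pushF2 K1 K2 K3 h12 h31 h32 b, mul_add, smul_add, mul_smul_comm,
    smul_mul_assoc, mul_assoc]
  simp only [pushE1 K1 K2 K3 h12 h31 h32 a, pushE2 K2 a, pushE3 K1 K2 K3 h12 h31 h32 a,
    mul_add, smul_add, mul_smul_comm, smul_mul_assoc, smul_smul, mul_assoc, zero_mul,
    smul_zero, add_zero, mul_zero]
  match_scalars
  · linear_combination E2
  · linear_combination E1
  · linear_combination E3

end key

lemma trig_ids (u : ℝ) (hc : Real.cos (u / Real.sqrt 2) ≠ 0) :
    (2 * (1/(2*Real.cos (u/Real.sqrt 2)^2)) * (Real.sin (Real.sqrt 2*u)/Real.sqrt 2)^2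
        + Real.cos (Real.sqrt 2*u) = 1)
    ∧ (-2 * (1/(2*Real.cos (u/Real.sqrt 2)^2)) * (Real.sin (Real.sqrt 2*u)/Real.sqrt 2)
        + 4 * (1/(2*Real.cos (u/Real.sqrt 2)^2)) * (Real.tan (u/Real.sqrt 2)/Real.sqrt 2)
          * (Real.sin (Real.sqrt 2*u)/Real.sqrt 2)^2
        + 2 * (Real.tan (u/Real.sqrt 2)/Real.sqrt 2) * Real.cos (Real.sqrt 2*u) = 0)
    ∧ (2 * (1/(2*Real.cos (u/Real.sqrt 2)^2))
        - 4 * (1/(2*Real.cos (u/Real.sqrt 2)^2)) * (Real.tan (u/Real.sqrt 2)/Real.sqrt 2)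
          * (Real.sin (Real.sqrt 2*u)/Real.sqrt 2)
        + 4 * (1/(2*Real.cos (u/Real.sqrt 2)^2)) * (Real.tan (u/Real.sqrt 2)/Real.sqrt 2)^2
          * (Real.sin (Real.sqrt 2*u)/Real.sqrt 2)^2
        + 2 * (Real.tan (u/Real.sqrt 2)/Real.sqrt 2)^2 * Real.cos (Real.sqrt 2*u) = 1) := by
  have hs2 : Real.sqrt 2 * Real.sqrt 2 = 2 := Real.mul_self_sqrt (by norm_num)
  have hs2ne : Real.sqrt 2 ≠ 0 := by positivity
  have h2u : Real.sqrt 2 * u = 2 * (u / Real.sqrt 2) := by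
    field_simp
    linear_combination u * hs2
  rw [h2u, Real.sin_two_mul, Real.cos_two_mul, Real.tan_eq_sin_div_cos]
  have hsc : Real.sin (u/Real.sqrt 2)^2 + Real.cos (u/Real.sqrt 2)^2 = 1 :=
    Real.sin_sq_add_cos_sq _
  set s := Real.sin (u/Real.sqrt 2)
  set c := Real.cos (u/Real.sqrt 2)
  refine ⟨?_, ?_, ?_⟩
  · field_simp
    nlinarith [hsc, hs2]
  · field_simp
    linear_combination 8*s*hsc + 2*s*(2*c^2-2)*hs2
  · field_simp
    linear_combination (8*s^2-4)*hsc + ((1-c^2)*(Real.sqrt 2*Real.sqrt 2+2) + 4*s^2*c^2 - 6*s^2)*hs2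


/-- Factorization of the exponential `exp(t(K1+K2))` for elements satisfying the
commutation relations `[K1,K2] = -2K3`, `[K3,K1] = 2K1`, `[K3,K2] = -2K2`. -/
theorem qho_factorization
    {A : Type*} [NormedRing A] [NormedAlgebra ℂ A] [CompleteSpace A]
    (K1 K2 K3 : A)
    (h12 : K1 * K2 - K2 * K1 = (-2 : ℂ) • K3)
    (h31 : K3 * K1 - K1 * K3 = (2 : ℂ) • K1)
    (h32 : K3 * K2 - K2 * K3 = (-2 : ℂ) • K2)
    (t : ℝ) (ht : |t| < Real.pi / Real.sqrt 2) :
    NormedSpace.exp ((t : ℂ) • (K1 + K2)) =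
      NormedSpace.exp (((Real.tan (t / Real.sqrt 2) / Real.sqrt 2 : ℝ) : ℂ) • K2) *
        NormedSpace.exp (((Real.sin (Real.sqrt 2 * t) / Real.sqrt 2 : ℝ) : ℂ) • K1) *
        NormedSpace.exp (((Real.tan (t / Real.sqrt 2) / Real.sqrt 2 : ℝ) : ℂ) • K2) := by
  have hs2pos : (0:ℝ) < Real.sqrt 2 := by positivity
  have hs2 : Real.sqrt 2 * Real.sqrt 2 = 2 := Real.mul_self_sqrt (by norm_num)
  set S : Set ℝ := Set.Ioo (-(Real.pi / Real.sqrt 2)) (Real.pi / Real.sqrt 2) with hS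
  set H : ℝ → A := fun u =>
    exp (((-u : ℝ) : ℂ) • (K1 + K2)) *
      (exp ((↑(Real.tan (u / Real.sqrt 2) / Real.sqrt 2) : ℂ) • K2) *
        (exp ((↑(Real.sin (Real.sqrt 2 * u) / Real.sqrt 2) : ℂ) • K1) *
          exp ((↑(Real.tan (u / Real.sqrt 2) / Real.sqrt 2) : ℂ) • K2))) with hHdef
  have hder : ∀ u ∈ S, HasDerivAt H 0 u := by
    intro u hu
    obtain ⟨hu1, hu2⟩ := hu
    have hππ : Real.pi / Real.sqrt 2 / Real.sqrt 2 = Real.pi / 2 := by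
      rw [div_div, hs2]
    have hc1 : -(Real.pi/2) < u / Real.sqrt 2 := by
      rw [← hππ, ← neg_div]
      gcongr
    have hc2 : u / Real.sqrt 2 < Real.pi/2 := by
      rw [← hππ]
      gcongr
    have hcos : Real.cos (u / Real.sqrt 2) ≠ 0 :=
      ne_of_gt (Real.cos_pos_of_mem_Ioo ⟨hc1, hc2⟩)
    -- derivatives of the scalar coefficient functions
    have hα : HasDerivAt (fun y : ℝ => Real.tan (y / Real.sqrt 2) / Real.sqrt 2)
        (1/(2*Real.cos (u/Real.sqrt 2)^2)) u := by
      have k1 : HasDerivAt (fun x : ℝ => x / Real.sqrt 2) (1 / Real.sqrt 2) u :=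
        (hasDerivAt_id u).div_const _
      have k2 := ((Real.hasDerivAt_tan hcos).comp u k1).div_const (Real.sqrt 2)
      refine k2.congr_deriv ?_
      field_simp
      linear_combination (-1 : ℝ) * hs2
    have hβ : HasDerivAt (fun y : ℝ => Real.sin (Real.sqrt 2 * y) / Real.sqrt 2)
        (Real.cos (Real.sqrt 2 * u)) u := by
      have k1 : HasDerivAt (fun x : ℝ => Real.sqrt 2 * x) (Real.sqrt 2 * 1) u :=
        (hasDerivAt_id u).const_mul (Real.sqrt 2)
      have k2 := ((Real.hasDerivAt_sin _).comp u k1).div_const (Real.sqrt 2)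
      refine k2.congr_deriv ?_
      field_simp
    -- derivatives of the exponential factors
    have hEα : HasDerivAt
        (fun y : ℝ => exp ((↑(Real.tan (y / Real.sqrt 2) / Real.sqrt 2) : ℂ) • K2))
        (((1/(2*Real.cos (u/Real.sqrt 2)^2) : ℝ) : ℂ) •
          (K2 * exp ((↑(Real.tan (u / Real.sqrt 2) / Real.sqrt 2) : ℂ) • K2))) u :=
      hasDerivAt_exp_real_smul K2 hα
    have hFβ : HasDerivAt
        (fun y : ℝ => exp ((↑(Real.sin (Real.sqrt 2 * y) / Real.sqrt 2) : ℂ) • K1))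
        ((↑(Real.cos (Real.sqrt 2 * u)) : ℂ) •
          (K1 * exp ((↑(Real.sin (Real.sqrt 2 * u) / Real.sqrt 2) : ℂ) • K1))) u :=
      hasDerivAt_exp_real_smul K1 hβ
    have hG : HasDerivAt (fun y : ℝ => exp (((-y : ℝ) : ℂ) • (K1 + K2)))
        ((((-1 : ℝ)) : ℂ) • ((K1 + K2) * exp (((-u : ℝ) : ℂ) • (K1 + K2)))) u :=
      hasDerivAt_exp_real_smul (K1 + K2) ((hasDerivAt_id u).neg)
    have hL := hEα.mul (hFβ.mul hEα)
    obtain ⟨e1, e3, e2⟩ := trig_ids u hcos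
    have hkey := key_deriv K1 K2 K3 h12 h31 h32
      (Real.tan (u / Real.sqrt 2) / Real.sqrt 2) (Real.sin (Real.sqrt 2 * u) / Real.sqrt 2)
      (1/(2*Real.cos (u/Real.sqrt 2)^2)) (Real.cos (Real.sqrt 2 * u)) e1 e3 e2
    have h2 := hG.mul hL
    beta_reduce at h2
    simp only [Pi.mul_apply] at h2
    rw [hkey] at h2
    refine h2.congr_deriv ?_
    rw [show (K1 + K2) * exp (((-u : ℝ) : ℂ) • (K1 + K2))
        = exp (((-u : ℝ) : ℂ) • (K1 + K2)) * (K1 + K2) from (exp_comm_self _ _).symm]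
    push_cast
    simp [neg_smul, one_smul, smul_mul_assoc, mul_assoc]
  -- H is constant on S
  have hSopen : IsOpen S := isOpen_Ioo
  have hmem : t ∈ S := by
    obtain ⟨h1, h2⟩ := abs_lt.mp ht
    exact ⟨h1, h2⟩
  have h0mem : (0:ℝ) ∈ S := by
    have : 0 < Real.pi / Real.sqrt 2 := by positivity
    exact ⟨by linarith, this⟩
  have hconst : H t = H 0 := by
    refine (convex_Ioo _ _).is_const_of_fderivWithin_eq_zero
      (fun u hu => ((hder u hu).differentiableAt).differentiableWithinAt)
      (fun u hu => ?_) hmem h0mem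
    rw [fderivWithin_of_isOpen hSopen hu]
    have := ((hder u hu).hasFDerivAt).fderiv
    rw [this]
    ext x
    simp
  have hH0 : H 0 = 1 := by
    simp only [hHdef]
    norm_num [exp_zero]
  rw [hH0] at hconst
  -- unfold H at t and solve
  have hinv : exp ((t : ℂ) • (K1 + K2)) * exp (((-t : ℝ) : ℂ) • (K1 + K2)) = 1 := by
    push_cast
    exact exp_mul_exp_neg (K1 + K2) t
  calc exp ((t : ℂ) • (K1 + K2))
      = exp ((t : ℂ) • (K1 + K2)) * H t := by rw [hconst, mul_one]
    _ = (exp ((t : ℂ) • (K1 + K2)) * exp (((-t : ℝ) : ℂ) • (K1 + K2))) *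
        (exp ((↑(Real.tan (t / Real.sqrt 2) / Real.sqrt 2) : ℂ) • K2) *
          (exp ((↑(Real.sin (Real.sqrt 2 * t) / Real.sqrt 2) : ℂ) • K1) *
            exp ((↑(Real.tan (t / Real.sqrt 2) / Real.sqrt 2) : ℂ) • K2))) := by
        rw [hHdef, mul_assoc]
    _ = _ := by rw [hinv, one_mul, ← mul_assoc]
end

section
/- Let A be a complete normed algebra over ℂ and K1, K2, K3 ∈ A satisfy [K1,K2] = −2·K3, [K3,K1] = 2·K1, [K3,K2] = −2·K2. Then for every α ∈ ℂ, exp(−α·K2) · K1 · exp(α·K2) = K1 − 2α·K3 + 2α²·K2. -/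
open NormedSpace Nat

/-- Key pow identity with ℕ-subtraction exponents. -/
lemma pow_conj_aux {A : Type*} [NormedRing A] [NormedAlgebra ℂ A]
    (a x y z : A) (hy : a * x = x * a + y) (hz : y * x = x * y + z)
    (hzx : z * x = x * z) (n : ℕ) :
    a * x ^ n = x ^ n * a + (n : ℂ) • (x ^ (n - 1) * y)
      + ((n.choose 2 : ℕ) : ℂ) • (x ^ (n - 2) * z) := by
  induction n with
  | zero => simp
  | succ n ih =>
    match n, ih with
    | 0, _ => simpa using hy
    | 1, _ =>
      have : a * x ^ 2 = (x * a + y) * x := by rw [sq, ← mul_assoc, hy]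
      rw [this, add_mul, mul_assoc, hy, hz]
      simp [sq, mul_add, mul_assoc]
      module
    | (m+2), ih =>
      have h1 : a * x ^ (m + 3) = (a * x ^ (m + 2)) * x := by
        rw [pow_succ, mul_assoc]
      rw [h1, ih, add_mul, add_mul, smul_mul_assoc, smul_mul_assoc,
        mul_assoc, mul_assoc, mul_assoc, hy, hz, hzx]
      have e1 : x ^ (m + 2) * (x * a + y) = x ^ (m+3) * a + x ^ (m+2) * y := by
        rw [mul_add, ← mul_assoc, ← pow_succ]
      have e2 : x ^ (m + 1) * (x * y + z) = x ^ (m+2) * y + x ^ (m+1) * z := by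
        rw [mul_add, ← mul_assoc, ← pow_succ]
      have e3 : x ^ m * (x * z) = x ^ (m+1) * z := by
        rw [← mul_assoc, ← pow_succ]
      simp only [Nat.add_sub_cancel, show m + 3 - 1 = m + 2 by omega,
        show m + 3 - 2 = m + 1 by omega, show m + 2 - 1 = m + 1 by omega,
        show m + 2 - 2 = m by omega] at *
      rw [e1, e2, e3]
      have c1 : ((m + 3 : ℕ) : ℂ) = ((m + 2 : ℕ) : ℂ) + 1 := by push_cast; ring
      have c2 : (((m + 3).choose 2 : ℕ) : ℂ)
          = (((m + 2).choose 2 : ℕ) : ℂ) + ((m + 2 : ℕ) : ℂ) := by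
        rw [Nat.choose_succ_succ (m+2) 1, Nat.choose_one_right]
        push_cast; ring
      simp only [Nat.add_sub_cancel, show m + 3 - 1 = m + 2 by omega,
        show m + 3 - 2 = m + 1 by omega, c1, c2]
      module

lemma exp_conj_aux {A : Type*} [NormedRing A] [NormedAlgebra ℂ A] [CompleteSpace A]
    (a x y z : A) (hy : a * x = x * a + y) (hz : y * x = x * y + z)
    (hzx : z * x = x * z) :
    a * exp x = exp x * (a + y + (2 : ℂ)⁻¹ • z) := by
  have hsum : Summable (fun n : ℕ => (n !⁻¹ : ℂ) • x ^ n) := expSeries_summable' x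
  have hg1 : Summable (fun n : ℕ => (n !⁻¹ : ℂ) • (x ^ n * a)) := by
    simpa [smul_mul_assoc] using hsum.mul_right a
  have hg2' : Summable (fun m : ℕ => (m !⁻¹ : ℂ) • (x ^ m * y)) := by
    simpa [smul_mul_assoc] using hsum.mul_right y
  have hg3' : Summable (fun m : ℕ => (m !⁻¹ : ℂ) • (x ^ m * z)) := by
    simpa [smul_mul_assoc] using hsum.mul_right z
  have hfac : ∀ m : ℕ, ((m ! : ℂ)) ≠ 0 := fun m => Nat.cast_ne_zero.2 m.factorial_ne_zero
  -- second series
  set g2 : ℕ → A := fun n => ((n ! : ℂ)⁻¹ * (n : ℂ)) • (x ^ (n - 1) * y) with hg2def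
  have hg2eq : ∀ m : ℕ, g2 (m + 1) = ((m ! : ℂ))⁻¹ • (x ^ m * y) := by
    intro m
    have h1 : (((m+1)! : ℕ) : ℂ) = ((m : ℂ) + 1) * (m ! : ℂ) := by
      rw [Nat.factorial_succ]; push_cast; ring
    have : (((m+1)! : ℕ) : ℂ)⁻¹ * ((m : ℂ) + 1) = ((m ! : ℂ))⁻¹ := by
      have hm1 : ((m : ℂ) + 1) ≠ 0 := by
        exact_mod_cast (Nat.cast_ne_zero (R := ℂ)).2 (Nat.succ_ne_zero m)
      rw [h1, mul_inv_rev, mul_assoc, inv_mul_cancel₀ hm1, mul_one]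
    simp only [hg2def]
    push_cast
    rw [this]
  have hg2 : Summable g2 := by
    rw [← summable_nat_add_iff 1]
    simpa [hg2eq] using hg2'
  have htg2 : ∑' n, g2 n = exp x * y := by
    rw [Summable.tsum_eq_zero_add hg2]
    simp only [hg2eq]
    have : g2 0 = 0 := by simp [hg2def]
    rw [this, zero_add, exp_eq_tsum ℂ]
    simp_rw [← smul_mul_assoc]
    exact hsum.tsum_mul_right y
  -- third series
  set g3 : ℕ → A := fun n => ((n ! : ℂ)⁻¹ * ((n.choose 2 : ℕ) : ℂ)) • (x ^ (n - 2) * z)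
    with hg3def
  have hg3eq : ∀ m : ℕ, g3 (m + 2) = ((2 : ℂ)⁻¹ * ((m ! : ℂ))⁻¹) • (x ^ m * z) := by
    intro m
    have hdvd : 2 ∣ (m + 2) * (m + 1) := by
      rw [mul_comm]
      exact (Nat.even_mul_succ_self (m + 1)).two_dvd
    have hch : 2 * (m + 2).choose 2 = (m + 2) * (m + 1) := by
      rw [Nat.choose_two_right, show m + 2 - 1 = m + 1 from rfl]
      exact Nat.mul_div_cancel' hdvd
    have hchC : 2 * (((m + 2).choose 2 : ℕ) : ℂ) = ((m : ℂ) + 2) * ((m : ℂ) + 1) := by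
      exact_mod_cast congrArg (Nat.cast : ℕ → ℂ) hch
    have hfc : (((m+2)! : ℕ) : ℂ) = ((m : ℂ) + 2) * ((m : ℂ) + 1) * (m ! : ℂ) := by
      rw [Nat.factorial_succ, Nat.factorial_succ]; push_cast; ring
    have hcoef : (((m+2)! : ℕ) : ℂ)⁻¹ * (((m + 2).choose 2 : ℕ) : ℂ)
        = (2 : ℂ)⁻¹ * ((m ! : ℂ))⁻¹ := by
      have hm2 : ((m : ℂ) + 2) ≠ 0 := by
        exact_mod_cast (Nat.cast_ne_zero (R := ℂ)).2 (by omega : m + 2 ≠ 0)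
      have hm1 : ((m : ℂ) + 1) ≠ 0 := by
        exact_mod_cast (Nat.cast_ne_zero (R := ℂ)).2 (by omega : m + 1 ≠ 0)
      rw [hfc]
      field_simp [hfac m, hm1, hm2]
      linear_combination hchC
    simp only [hg3def, Nat.add_sub_cancel, hcoef]
  have hg3 : Summable g3 := by
    rw [← summable_nat_add_iff 2]
    simp only [hg3eq]
    exact (hg3'.const_smul ((2:ℂ)⁻¹)).congr fun m => by rw [smul_smul]
  have htg3 : ∑' n, g3 n = (2 : ℂ)⁻¹ • (exp x * z) := by
    rw [Summable.tsum_eq_zero_add hg3, Summable.tsum_eq_zero_add ((summable_nat_add_iff 1).2 hg3)]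
    have h0 : g3 0 = 0 := by simp [hg3def]
    have h1 : g3 (0 + 1) = 0 := by simp [hg3def]
    rw [h0, h1, zero_add, zero_add]
    simp only [show ∀ n : ℕ, n + 1 + 1 = n + 2 from fun n => rfl, hg3eq]
    simp_rw [← smul_smul]
    rw [tsum_const_smul'' ((2:ℂ)⁻¹), exp_eq_tsum ℂ]
    congr 1
    simp_rw [← smul_mul_assoc]
    exact hsum.tsum_mul_right z
  -- assemble
  have key : ∀ n : ℕ, ((n ! : ℂ))⁻¹ • (a * x ^ n)
      = ((n ! : ℂ))⁻¹ • (x ^ n * a) + g2 n + g3 n := by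
    intro n
    rw [pow_conj_aux a x y z hy hz hzx n]
    simp only [hg2def, hg3def, smul_add, mul_smul]
  have hga : Summable fun n : ℕ => ((n ! : ℂ))⁻¹ • (a * x ^ n) := by
    simp only [key]
    exact (hg1.add hg2).add hg3
  calc a * exp x = ∑' n : ℕ, ((n ! : ℂ))⁻¹ • (a * x ^ n) := by
        rw [exp_eq_tsum ℂ, ← hsum.tsum_mul_left a]
        simp_rw [mul_smul_comm]
    _ = (∑' n : ℕ, ((n ! : ℂ))⁻¹ • (x ^ n * a)) + (∑' n, g2 n) + (∑' n, g3 n) := by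
        simp_rw [key]
        rw [Summable.tsum_add (hg1.add hg2) hg3, Summable.tsum_add hg1 hg2]
    _ = exp x * a + exp x * y + (2:ℂ)⁻¹ • (exp x * z) := by
        rw [htg2, htg3, exp_eq_tsum ℂ]
        congr 2
        simp_rw [← smul_mul_assoc]
        exact hsum.tsum_mul_right a
    _ = exp x * (a + y + (2:ℂ)⁻¹ • z) := by
        rw [mul_add, mul_add, mul_smul_comm]

/-- Conjugation formula: `exp(-αK2) K1 exp(αK2) = K1 - 2αK3 + 2α²K2` for elements
satisfying `[K1,K2] = -2K3`, `[K3,K1] = 2K1`, `[K3,K2] = -2K2`. -/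
theorem conjugation_K1
    {A : Type*} [NormedRing A] [NormedAlgebra ℂ A] [CompleteSpace A]
    (K1 K2 K3 : A)
    (h12 : K1 * K2 - K2 * K1 = (-2 : ℂ) • K3)
    (h31 : K3 * K1 - K1 * K3 = (2 : ℂ) • K1)
    (h32 : K3 * K2 - K2 * K3 = (-2 : ℂ) • K2)
    (α : ℂ) :
    NormedSpace.exp (-α • K2) * K1 * NormedSpace.exp (α • K2) =
      K1 - (2 * α) • K3 + (2 * α ^ 2) • K2 := by
  have h12' : K1 * K2 = K2 * K1 + (-2 : ℂ) • K3 := by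
    rw [← h12]; abel
  have h32' : K3 * K2 = K2 * K3 + (-2 : ℂ) • K2 := by
    rw [← h32]; abel
  set x : A := α • K2 with hxdef
  have hy : K1 * x = x * K1 + ((-2 * α) • K3) := by
    rw [hxdef, mul_smul_comm, smul_mul_assoc, h12', smul_add, smul_smul]
    ring_nf
  have hz : ((-2 * α) • K3) * x = x * ((-2 * α) • K3) + ((4 * α ^ 2) • K2) := by
    rw [hxdef, smul_mul_assoc, mul_smul_comm, smul_smul, mul_smul_comm, smul_mul_assoc,
      smul_smul, h32', smul_add, smul_smul]
    match_scalars <;> ring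
  have hzx : ((4 * α ^ 2) • K2) * x = x * ((4 * α ^ 2) • K2) := by
    rw [hxdef, smul_mul_assoc, mul_smul_comm, mul_smul_comm, smul_mul_assoc]
  have key := exp_conj_aux K1 x ((-2 * α) • K3) ((4 * α ^ 2) • K2) hy hz hzx
  have hnx : -α • K2 = -x := by rw [hxdef, neg_smul]
  have hinv : exp (-x) * exp x = 1 := by
    rw [← exp_add_of_commute_of_mem_ball (𝕂 := ℂ) ((Commute.refl x).neg_left)
      ((expSeries_radius_eq_top ℂ A).symm ▸ edist_lt_top _ _)
      ((expSeries_radius_eq_top ℂ A).symm ▸ edist_lt_top _ _), neg_add_cancel, exp_zero]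
  rw [hnx, mul_assoc, key, ← mul_assoc, hinv, one_mul]
  match_scalars <;> ring
end

section
/- Let A be a complete normed algebra over ℂ and K1, K2, K3 ∈ A satisfy [K1,K2] = −2·K3, [K3,K1] = 2·K1, [K3,K2] = −2·K2. Then for every β ∈ ℂ, exp(−β·K1) · K2 · exp(β·K1) = K2 + 2β·K3 + 2β²·K1. -/
open NormedSpace

lemma key_pow
    {A : Type*} [NormedRing A] [NormedAlgebra ℂ A]
    (K1 K2 K3 : A)
    (h12 : K1 * K2 - K2 * K1 = (-2 : ℂ) • K3)
    (h31 : K3 * K1 - K1 * K3 = (2 : ℂ) • K1) :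
    ∀ n : ℕ, K1 ^ (n+1) * K2 = K2 * K1 ^ (n+1)
      + ((-2 : ℂ) * (n+1)) • (K3 * K1 ^ n) + ((2 : ℂ) * (n+1) * n) • K1 ^ n := by
  have e12 : K1 * K2 = K2 * K1 + (-2 : ℂ) • K3 := by
    rw [← h12]; abel
  have e13 : K1 * K3 = K3 * K1 + (-2 : ℂ) • K1 := by
    have h : K1 * K3 = K3 * K1 - (2:ℂ) • K1 := by rw [← h31]; abel
    rw [h]; module
  intro n
  induction n with
  | zero => simpa using e12
  | succ n ih =>
    have h : K1 ^ (n+2) * K2 = K1 * (K1 ^ (n+1) * K2) := by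
      rw [← mul_assoc, ← _root_.pow_succ']
    rw [h, ih, mul_add, mul_add, mul_smul_comm, mul_smul_comm, ← mul_assoc, e12,
      ← mul_assoc, e13]
    have hp : K1 * K1 ^ (n+1) = K1 ^ (n+2) := (_root_.pow_succ' K1 (n+1)).symm
    have hp' : K1 * K1 ^ n = K1 ^ (n+1) := (_root_.pow_succ' K1 n).symm
    simp only [mul_assoc, hp, hp', add_mul, smul_mul_assoc, smul_add, smul_smul]
    match_scalars <;> push_cast <;> ring

lemma main_comm
    {A : Type*} [NormedRing A] [NormedAlgebra ℂ A] [CompleteSpace A]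
    (K1 K2 K3 : A)
    (h12 : K1 * K2 - K2 * K1 = (-2 : ℂ) • K3)
    (h31 : K3 * K1 - K1 * K3 = (2 : ℂ) • K1)
    (β : ℂ) :
    exp (-β • K1) * K2 =
      (K2 + (2 * β) • K3 + (2 * β ^ 2) • K1) * exp (-β • K1) := by
  set c : ℕ → ℂ := fun n => ((Nat.factorial n : ℂ))⁻¹ * (-β) ^ n with hc
  set f : ℕ → A := fun n => c n • K1 ^ n with hf
  have hcongr : ∀ n : ℕ, ((Nat.factorial n : ℂ))⁻¹ • (-β • K1) ^ n = f n := by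
    intro n
    simp only [smul_pow, smul_smul, hf, hc]
  have he : exp (-β • K1) = ∑' n, f n := by
    rw [exp_eq_tsum ℂ]
    exact tsum_congr hcongr
  have hs : Summable f :=
    (expSeries_summable' (𝕂 := ℂ) (-β • K1)).congr hcongr
  have hcs : ∀ n : ℕ, ((n : ℂ) + 1) * c (n+1) = -β * c n := by
    intro n
    have h2 : ((n : ℂ) + 1) ≠ 0 := by
      have h := (Nat.cast_ne_zero (R := ℂ) (n := n+1)).mpr n.succ_ne_zero
      push_cast at h; exact h
    have h1 : ((Nat.factorial n : ℂ)) ≠ 0 := Nat.cast_ne_zero.mpr n.factorial_ne_zero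
    simp only [hc, Nat.factorial_succ, pow_succ]
    push_cast
    rw [mul_inv]
    field_simp
  set b : ℕ → A := fun n => ((-2 : ℂ) * n * c n) • (K3 * K1 ^ (n - 1)) with hb
  set d : ℕ → A := fun n => ((2 : ℂ) * n * (n - 1 : ℕ) * c n) • K1 ^ (n - 1) with hd
  have hterm : ∀ n, f n * K2 = K2 * f n + b n + d n := by
    intro n
    match n with
    | 0 => simp [hf, hb, hd, smul_mul_assoc, mul_smul_comm]
    | (m+1) =>
      simp only [hf, hb, hd, Nat.add_sub_cancel, smul_mul_assoc, mul_smul_comm]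
      rw [key_pow K1 K2 K3 h12 h31 m]
      simp only [smul_add, smul_smul]
      match_scalars <;> push_cast <;> ring
  have hb1 : ∀ n, b (n+1) = ((2:ℂ) * β) • (K3 * f n) := by
    intro n
    have h21 : n + 1 - 1 = n := rfl
    simp only [hb, hf, h21, mul_smul_comm, smul_smul]
    congr 1
    push_cast
    linear_combination (norm := (push_cast; ring)) (-2 : ℂ) * hcs n
  have hd2 : ∀ n, d (n+2) = ((2:ℂ) * β ^ 2) • (K1 * f n) := by
    intro n
    have h22 : n + 2 - 1 = n + 1 := rfl
    simp only [hd, hf, h22, mul_smul_comm, smul_smul, ← _root_.pow_succ']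
    congr 1
    push_cast
    linear_combination (norm := (push_cast; ring)) (2 * ((n:ℂ)+1)) * hcs (n+1) - 2 * β * hcs n
  have hsb : Summable b := by
    apply (summable_nat_add_iff 1).mp
    have h : (fun n => b (n + 1)) = fun n => ((2:ℂ) * β) • (K3 * f n) := funext hb1
    rw [h]
    exact ((hs.mul_left K3).const_smul _)
  have hsd : Summable d := by
    apply (summable_nat_add_iff 2).mp
    have h : (fun n => d (n + 2)) = fun n => ((2:ℂ) * β ^ 2) • (K1 * f n) := funext hd2
    rw [h]
    exact ((hs.mul_left K1).const_smul _)
  have hsa : Summable (fun n => K2 * f n) := hs.mul_left K2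
  calc exp (-β • K1) * K2 = (∑' n, f n) * K2 := by rw [he]
    _ = ∑' n, f n * K2 := (hs.tsum_mul_right K2).symm
    _ = ∑' n, (K2 * f n + b n + d n) := tsum_congr hterm
    _ = (∑' n, K2 * f n) + (∑' n, b n) + (∑' n, d n) := by
        rw [Summable.tsum_add (hsa.add hsb) hsd, Summable.tsum_add hsa hsb]
    _ = K2 * exp (-β • K1) + ((2:ℂ) * β) • (K3 * exp (-β • K1))
          + ((2:ℂ) * β ^ 2) • (K1 * exp (-β • K1)) := by
        rw [he]
        congr 1
        congr 1
        · exact hs.tsum_mul_left K2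
        · rw [Summable.tsum_eq_zero_add hsb]
          simp only [hb1]
          rw [Summable.tsum_const_smul _ (hs.mul_left K3), hs.tsum_mul_left K3]
          simp [hb]
        · rw [Summable.tsum_eq_zero_add hsd, Summable.tsum_eq_zero_add ((summable_nat_add_iff 1).mpr hsd)]
          simp only [hd2]
          rw [Summable.tsum_const_smul _ (hs.mul_left K1), hs.tsum_mul_left K1]
          simp [hd]
    _ = (K2 + (2 * β) • K3 + (2 * β ^ 2) • K1) * exp (-β • K1) := by
        simp only [add_mul, smul_mul_assoc]

/-- Conjugation formula: `exp(-βK1) K2 exp(βK1) = K2 + 2βK3 + 2β²K1` for elements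
satisfying `[K1,K2] = -2K3`, `[K3,K1] = 2K1`, `[K3,K2] = -2K2`. -/
theorem conjugation_K2
    {A : Type*} [NormedRing A] [NormedAlgebra ℂ A] [CompleteSpace A]
    (K1 K2 K3 : A)
    (h12 : K1 * K2 - K2 * K1 = (-2 : ℂ) • K3)
    (h31 : K3 * K1 - K1 * K3 = (2 : ℂ) • K1)
    (h32 : K3 * K2 - K2 * K3 = (-2 : ℂ) • K2)
    (β : ℂ) :
    NormedSpace.exp (-β • K1) * K2 * NormedSpace.exp (β • K1) =
      K2 + (2 * β) • K3 + (2 * β ^ 2) • K1 := by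
  have hinv : exp (-β • K1) * exp (β • K1) = 1 := by
    let +nondep : NormedAlgebra ℚ A := .restrictScalars ℚ ℂ A
    rw [← exp_add_of_commute (((Commute.refl K1).smul_left (-β)).smul_right β)]
    simp [neg_smul]
  rw [main_comm K1 K2 K3 h12 h31 β, mul_assoc, hinv, mul_one]
end

section
/- For every real number a > 0, the sum over all natural numbers k with k ≥ 3a of a^k / k! is at most exp(−a/4); that is, Σ_{k ∈ ℕ, k ≥ 3a} a^k/k! ≤ exp(−a/4). -/
/-!
Rankin's trick: on `k ≥ 3a` the weight `3 ^ (k - 3a)` is at least `1`, so the tail is at most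
`3 ^ (-3a) ∑ (3a)^k / k! = exp (3a - 3a log 3)`, and `3 log 3 - 3 ≥ 1/4`.
-/

open Real Nat

lemma pow_div_factorial_le_of_le_natCast {x t c : ℝ} (hx : 0 ≤ x) (ht : 1 ≤ t) {k : ℕ}
    (hk : c ≤ k) : x ^ k / k ! ≤ (t * x) ^ k / k ! / t ^ c := by
  have htc : 0 < t ^ c := rpow_pos_of_pos (by linarith) c
  have hpow : t ^ c ≤ t ^ k := by
    simpa only [rpow_natCast] using rpow_le_rpow_of_exponent_le ht hk
  rw [le_div_iff₀ htc, div_mul_eq_mul_div, mul_pow, mul_comm (t ^ k)]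
  gcongr

theorem tsum_pow_div_factorial_tail_le {x c : ℝ} (hx : 0 ≤ x) {t : ℝ} (ht : 1 ≤ t) :
    ∑' k : ℕ, (if c ≤ (k : ℝ) then x ^ k / (k ! : ℝ) else 0) ≤ exp (t * x) / t ^ c := by
  have hexp : HasSum (fun k : ℕ ↦ (t * x) ^ k / k ! / t ^ c) (exp (t * x) / t ^ c) :=
    (exp_eq_exp_ℝ ▸ NormedSpace.expSeries_div_hasSum_exp (t * x)).div_const _
  have hle : ∀ k : ℕ, (if c ≤ (k : ℝ) then x ^ k / (k ! : ℝ) else 0) ≤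
      (t * x) ^ k / k ! / t ^ c := by
    intro k
    split_ifs with hk
    · exact pow_div_factorial_le_of_le_natCast hx ht hk
    · have : 0 ≤ t * x := mul_nonneg (by linarith) hx
      positivity
  have hnonneg : ∀ k : ℕ, 0 ≤ (if c ≤ (k : ℝ) then x ^ k / (k ! : ℝ) else 0) := by
    intro k
    split_ifs <;> positivity
  exact (hexp.summable.of_nonneg_of_le hnonneg hle).tsum_le_tsum hle hexp.summable
    |>.trans_eq hexp.tsum_eq

/-- Tail bound for the exponential power series:
`∑_{k ≥ 3a} a^k / k! ≤ exp(-a/4)` for every real `a > 0`. -/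
theorem exp_series_tail_bound (a : ℝ) (ha : 0 < a) :
    ∑' k : ℕ, (if 3 * a ≤ (k : ℝ) then a ^ k / (k.factorial : ℝ) else 0) ≤
      Real.exp (-a / 4) := by
  refine (tsum_pow_div_factorial_tail_le ha.le (by norm_num : (1 : ℝ) ≤ 3)).trans ?_
  rw [rpow_def_of_pos (by norm_num), ← exp_sub, exp_le_exp]
  nlinarith [log_three_gt_d9]
end

section
/- Let X and Δ be M×M complex matrices, let P and P′ be orthogonal projection matrices, let t be a natural number, and let R ≥ 1, ε ≥ 0, ε′ ≥ 0, B ≥ 0 be real numbers such that for every natural number s ≤ t: ‖P·X^s·P′‖ ≤ R^s, ‖P′·X^s·P‖ ≤ R^s, ‖P·X^s·(I − P′)‖ ≤ ε, and ‖(I − P′)·X^s·P‖ ≤ ε; and moreover ‖P′·Δ·P′‖ ≤ ε′ and ‖Δ‖ ≤ B. Then the t-fold iterated commutator satisfies ‖P·[X,Δ]_t·P‖ ≤ 2^t·(R^t·ε′ + 2·B·R^t·ε + B·ε²). -/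
open scoped Matrix.Norms.L2Operator

/-- The `t`-fold iterated commutator: `[A,B]_0 = B`, `[A,B]_{t+1} = A[A,B]_t - [A,B]_t A`. -/
def iterComm {R : Type*} [Ring R] (A B : R) : ℕ → R
  | 0 => B
  | t + 1 => A * iterComm A B t - iterComm A B t * A

lemma iterComm_eq_sum {M : ℕ} (X Δ : Matrix (Fin M) (Fin M) ℂ) (t : ℕ) :
    iterComm X Δ t = ∑ m ∈ Finset.range (t + 1),
      t.choose m • (X ^ m * Δ * (-X) ^ (t - m)) := by
  have hneg : -(LinearMap.mulRight ℂ X) = LinearMap.mulRight ℂ (-X) := by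
    ext c; simp [mul_neg]
  have key : iterComm X Δ t =
      ((LinearMap.mulLeft ℂ X - LinearMap.mulRight ℂ X) ^ t) Δ := by
    induction t with
    | zero => simp [iterComm]
    | succ n ih =>
      rw [pow_succ']
      simp [iterComm, ih, Module.End.mul_apply, LinearMap.sub_apply]
  rw [key, sub_eq_add_neg,
    ((LinearMap.commute_mulLeft_right (R := ℂ) X X).neg_right).add_pow]
  simp [hneg, LinearMap.sum_apply, Module.End.mul_apply, Module.End.natCast_apply,
    LinearMap.pow_mulLeft, LinearMap.pow_mulRight, mul_assoc]
  refine Finset.sum_congr rfl fun x _ => ?_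
  rw [← mul_assoc, ← (Nat.cast_commute (t.choose x) (X ^ x)).eq, mul_assoc]

/-- Bound on the projected `t`-fold iterated commutator `P [X,Δ]_t P` in the
ℓ²→ℓ² operator norm on `M × M` complex matrices. -/
theorem iterComm_projected_bound {M : ℕ}
    (X Δ P P' : Matrix (Fin M) (Fin M) ℂ)
    (hP : P * P = P) (hPadj : P.conjTranspose = P)
    (hP' : P' * P' = P') (hP'adj : P'.conjTranspose = P')
    (t : ℕ) (R ε ε' B : ℝ)
    (hR : 1 ≤ R) (hε : 0 ≤ ε) (hε' : 0 ≤ ε') (hB : 0 ≤ B)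
    (h1 : ∀ s ≤ t, ‖P * X ^ s * P'‖ ≤ R ^ s)
    (h2 : ∀ s ≤ t, ‖P' * X ^ s * P‖ ≤ R ^ s)
    (h3 : ∀ s ≤ t, ‖P * X ^ s * (1 - P')‖ ≤ ε)
    (h4 : ∀ s ≤ t, ‖(1 - P') * X ^ s * P‖ ≤ ε)
    (h5 : ‖P' * Δ * P'‖ ≤ ε')
    (h6 : ‖Δ‖ ≤ B) :
    ‖P * iterComm X Δ t * P‖ ≤
      2 ^ t * (R ^ t * ε' + 2 * B * R ^ t * ε + B * ε ^ 2) := by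
  set K : ℝ := R ^ t * ε' + 2 * B * R ^ t * ε + B * ε ^ 2 with hK
  have hRt : (0:ℝ) ≤ R ^ t := pow_nonneg (le_trans zero_le_one hR) t
  have nmul3 : ∀ a b c : Matrix (Fin M) (Fin M) ℂ, ‖a * b * c‖ ≤ ‖a‖ * ‖b‖ * ‖c‖ :=
    fun a b c => (norm_mul_le _ _).trans
      (mul_le_mul_of_nonneg_right (norm_mul_le a b) (norm_nonneg c))
  -- per-term bound
  have term_bound : ∀ m ≤ t, ‖P * (X ^ m * Δ * X ^ (t - m)) * P‖ ≤ K := by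
    intro m hm
    set j := t - m with hj
    have hjle : j ≤ t := Nat.sub_le t m
    have hmj : m + j = t := Nat.add_sub_cancel' hm
    have hP'a : ∀ Y : Matrix (Fin M) (Fin M) ℂ, P' * (P' * Y) = P' * Y := fun Y => by
      rw [← mul_assoc, hP']
    have expand : P * (X ^ m * Δ * X ^ j) * P
        = (P * X ^ m * P') * (P' * Δ * P') * (P' * X ^ j * P)
          + (P * X ^ m * P') * Δ * ((1 - P') * X ^ j * P)
          + (P * X ^ m * (1 - P')) * Δ * (P' * X ^ j * P)
          + (P * X ^ m * (1 - P')) * Δ * ((1 - P') * X ^ j * P) := by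
      simp only [mul_sub, sub_mul, mul_one, one_mul, mul_assoc, hP'a]
      abel
    have hRm : R ^ m ≤ R ^ t := pow_le_pow_right₀ hR hm
    have hRj : R ^ j ≤ R ^ t := pow_le_pow_right₀ hR hjle
    have hRm0 : (0:ℝ) ≤ R ^ m := pow_nonneg (le_trans zero_le_one hR) m
    have hRj0 : (0:ℝ) ≤ R ^ j := pow_nonneg (le_trans zero_le_one hR) j
    have b1 : ‖(P * X ^ m * P') * (P' * Δ * P') * (P' * X ^ j * P)‖ ≤ R ^ t * ε' := by
      refine (nmul3 _ _ _).trans ?_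
      calc ‖P * X ^ m * P'‖ * ‖P' * Δ * P'‖ * ‖P' * X ^ j * P‖
          ≤ R ^ m * ε' * R ^ j := by
            exact mul_le_mul (mul_le_mul (h1 m hm) h5 (norm_nonneg _) hRm0) (h2 j hjle) (norm_nonneg _) (mul_nonneg hRm0 hε')
        _ = R ^ t * ε' := by rw [mul_right_comm, ← pow_add, hmj]
    have b2 : ‖(P * X ^ m * P') * Δ * ((1 - P') * X ^ j * P)‖ ≤ B * R ^ t * ε := by
      refine (nmul3 _ _ _).trans ?_
      calc ‖P * X ^ m * P'‖ * ‖Δ‖ * ‖(1 - P') * X ^ j * P‖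
          ≤ R ^ m * B * ε := by
            exact mul_le_mul (mul_le_mul (h1 m hm) h6 (norm_nonneg _) hRm0) (h4 j hjle) (norm_nonneg _) (mul_nonneg hRm0 hB)
        _ ≤ R ^ t * B * ε := by gcongr
        _ = B * R ^ t * ε := by ring
    have b3 : ‖(P * X ^ m * (1 - P')) * Δ * (P' * X ^ j * P)‖ ≤ B * R ^ t * ε := by
      refine (nmul3 _ _ _).trans ?_
      calc ‖P * X ^ m * (1 - P')‖ * ‖Δ‖ * ‖P' * X ^ j * P‖
          ≤ ε * B * R ^ j := by
            exact mul_le_mul (mul_le_mul (h3 m hm) h6 (norm_nonneg _) hε) (h2 j hjle) (norm_nonneg _) (mul_nonneg hε hB)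
        _ ≤ ε * B * R ^ t := by gcongr
        _ = B * R ^ t * ε := by ring
    have b4 : ‖(P * X ^ m * (1 - P')) * Δ * ((1 - P') * X ^ j * P)‖ ≤ B * ε ^ 2 := by
      refine (nmul3 _ _ _).trans ?_
      calc ‖P * X ^ m * (1 - P')‖ * ‖Δ‖ * ‖(1 - P') * X ^ j * P‖
          ≤ ε * B * ε := by
            exact mul_le_mul (mul_le_mul (h3 m hm) h6 (norm_nonneg _) hε) (h4 j hjle) (norm_nonneg _) (mul_nonneg hε hB)
        _ = B * ε ^ 2 := by ring
    calc ‖P * (X ^ m * Δ * X ^ j) * P‖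
        ≤ ‖(P * X ^ m * P') * (P' * Δ * P') * (P' * X ^ j * P)‖
          + ‖(P * X ^ m * P') * Δ * ((1 - P') * X ^ j * P)‖
          + ‖(P * X ^ m * (1 - P')) * Δ * (P' * X ^ j * P)‖
          + ‖(P * X ^ m * (1 - P')) * Δ * ((1 - P') * X ^ j * P)‖ := by
          rw [expand]
          exact le_trans (norm_add_le _ _) (add_le_add (le_trans (norm_add_le _ _)
            (add_le_add (norm_add_le _ _) le_rfl)) le_rfl)
      _ ≤ R ^ t * ε' + B * R ^ t * ε + B * R ^ t * ε + B * ε ^ 2 :=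
          add_le_add (add_le_add (add_le_add b1 b2) b3) b4
      _ = K := by rw [hK]; ring
  -- sign removal
  have term_bound' : ∀ m ≤ t, ‖P * (X ^ m * Δ * (-X) ^ (t - m)) * P‖ ≤ K := by
    intro m hm
    rcases Nat.even_or_odd (t - m) with he | ho
    · rw [he.neg_pow]; exact term_bound m hm
    · rw [ho.neg_pow]
      calc ‖P * (X ^ m * Δ * -X ^ (t - m)) * P‖
          = ‖-(P * (X ^ m * Δ * X ^ (t - m)) * P)‖ := by rw [show
              P * (X ^ m * Δ * -X ^ (t - m)) * P
                = -(P * (X ^ m * Δ * X ^ (t - m)) * P) by noncomm_ring]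
        _ ≤ K := by rw [norm_neg]; exact term_bound m hm
  -- assemble
  have hK0 : 0 ≤ K := le_trans (norm_nonneg _) (term_bound 0 (Nat.zero_le t))
  rw [iterComm_eq_sum, Finset.mul_sum, Finset.sum_mul]
  calc ‖∑ m ∈ Finset.range (t + 1), P * (t.choose m • (X ^ m * Δ * (-X) ^ (t - m))) * P‖
      ≤ ∑ m ∈ Finset.range (t + 1), (t.choose m : ℝ) * K := by
        refine (norm_sum_le _ _).trans (Finset.sum_le_sum fun m hmem => ?_)
        have hm : m ≤ t := Nat.lt_succ_iff.mp (Finset.mem_range.mp hmem)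
        rw [mul_smul_comm, smul_mul_assoc, ← Nat.cast_smul_eq_nsmul ℝ, norm_smul, Real.norm_natCast]
        exact mul_le_mul_of_nonneg_left (term_bound' m hm) (Nat.cast_nonneg _)
    _ = 2 ^ t * K := by
        rw [← Finset.sum_mul, ← Nat.cast_sum, Nat.sum_range_choose]
        push_cast; ring
end

section
/- Let X, Y, Δ be M×M complex matrices, let P and P′ be orthogonal projection matrices, let c ∈ ℂ, and let R ≥ 1, B ≥ 0, 0 < ε ≤ 1, 0 ≤ ε′ ≤ ε be real numbers and T₀ a natural number with T₀ ≥ 6R. Assume: (i) [X,[X,Y]] = Δ + c·X; (ii) for every natural number s: ‖P·X^s‖ ≤ R^s and ‖X^s·P‖ ≤ R^s; (iii) for every natural number s ≤ T₀: ‖P·X^s·(I − P′)‖ ≤ ε and ‖(I − P′)·X^s·P‖ ≤ ε; (iv) ‖P′·Δ·P′‖ ≤ ε′ and ‖Δ‖ ≤ B. Then the series Σ_{t=3}^{∞} (1/t!)·[X,Y]_t converges and ‖P·(Σ_{t=3}^{∞} (1/t!)·[X,Y]_t)·P‖ ≤ (3B + 1)·(e^{2R}·ε + e^{−R/2}). 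-/
open scoped Matrix.Norms.L2Operator

open Finset in
lemma iterComm_eq_sum_s11 {R : Type*} [Ring R] [Algebra ℂ R] (A B : R) (k : ℕ) :
    iterComm A B k = ∑ j ∈ range (k + 1),
      ((-1 : ℂ) ^ (k - j) * (k.choose j : ℂ)) • (A ^ j * B * A ^ (k - j)) := by
  induction k with
  | zero => simp [iterComm]
  | succ k ih =>
    show A * iterComm A B k - iterComm A B k * A = _
    rw [ih, mul_sum, sum_mul]
    have hL : ∀ j ∈ range (k + 1),
        A * (((-1 : ℂ) ^ (k - j) * (k.choose j : ℂ)) • (A ^ j * B * A ^ (k - j)))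
        = ((-1 : ℂ) ^ (k - j) * (k.choose j : ℂ)) • (A ^ (j+1) * B * A ^ (k + 1 - (j+1))) := by
      intro j hj
      rw [mul_smul_comm]
      congr 1
      rw [Nat.succ_sub_succ]
      rw [← mul_assoc, ← mul_assoc, ← pow_succ']
    have hR : ∀ j ∈ range (k + 1),
        (((-1 : ℂ) ^ (k - j) * (k.choose j : ℂ)) • (A ^ j * B * A ^ (k - j))) * A
        = ((-1 : ℂ) ^ (k - j) * (k.choose j : ℂ)) • (A ^ j * B * A ^ (k + 1 - j)) := by
      intro j hj
      simp only [mem_range, Nat.lt_succ_iff] at hj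
      rw [smul_mul_assoc]
      congr 1
      have he : k + 1 - j = (k - j) + 1 := by omega
      rw [he, mul_assoc, mul_assoc, ← pow_succ, ← mul_assoc]
    rw [sum_congr rfl hL, sum_congr rfl hR]
    set T : ℕ → R := fun j => A ^ j * B * A ^ (k + 1 - j) with hTdef
    have key : ∑ j ∈ range (k + 2), ((-1 : ℂ) ^ (k + 1 - j) * ((k+1).choose j : ℂ)) • T j
        = ∑ j ∈ range (k + 1), ((-1 : ℂ) ^ (k - j) * (k.choose j : ℂ)) • T (j+1)
          - ∑ j ∈ range (k + 1), ((-1 : ℂ) ^ (k - j) * (k.choose j : ℂ)) • T j := by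
      rw [Finset.sum_range_succ' (fun j => ((-1 : ℂ) ^ (k + 1 - j) * ((k+1).choose j : ℂ)) • T j)]
      have split : ∀ j ∈ range (k + 1),
          ((-1 : ℂ) ^ (k + 1 - (j+1)) * ((k+1).choose (j+1) : ℂ)) • T (j+1)
          = ((-1 : ℂ) ^ (k - j) * (k.choose j : ℂ)) • T (j+1)
            - ((-1 : ℂ) ^ (k - (j+1)) * (k.choose (j+1) : ℂ)) • T (j+1) := by
        intro j hj
        simp only [mem_range, Nat.lt_succ_iff] at hj
        rw [← sub_smul]
        congr 1
        rw [Nat.succ_sub_succ, Nat.choose_succ_succ]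
        push_cast
        rcases Nat.lt_or_ge j k with h | h
        · have : k - j = (k - (j+1)) + 1 := by omega
          rw [this]
          ring
        · have hjk : j = k := le_antisymm hj h
          subst hjk
          simp
      rw [sum_congr rfl split, Finset.sum_sub_distrib]
      have last : ∑ j ∈ range (k + 1), ((-1 : ℂ) ^ (k - (j+1)) * (k.choose (j+1) : ℂ)) • T (j+1)
          = ∑ j ∈ range (k + 1), ((-1 : ℂ) ^ (k - j) * (k.choose j : ℂ)) • T j
            - ((-1 : ℂ) ^ k * (k.choose 0 : ℂ)) • T 0 := by
        rw [Finset.sum_range_succ' (fun j => ((-1 : ℂ) ^ (k - j) * (k.choose j : ℂ)) • T j)]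
        rw [Finset.sum_range_succ]
        simp [Nat.choose_succ_self]
      rw [last]
      have : ((-1 : ℂ) ^ (k + 1 - 0) * ((k+1).choose 0 : ℂ)) • T 0
          = - (((-1 : ℂ) ^ k * (k.choose 0 : ℂ)) • T 0) := by
        rw [← neg_smul]
        congr 1
        simp [pow_succ]
      rw [this]
      abel
    rw [key]

lemma iterComm_norm_le {A : Type*} [NormedRing A] (X Y : A) :
    ∀ t, ‖iterComm X Y t‖ ≤ (2 * ‖X‖) ^ t * ‖Y‖
  | 0 => by simp [iterComm]
  | t + 1 => by
    have ih := iterComm_norm_le X Y t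
    have h0 : (0:ℝ) ≤ 2 * ‖X‖ := by positivity
    calc ‖iterComm X Y (t+1)‖ = ‖X * iterComm X Y t - iterComm X Y t * X‖ := rfl
      _ ≤ ‖X * iterComm X Y t‖ + ‖iterComm X Y t * X‖ := norm_sub_le _ _
      _ ≤ ‖X‖ * ‖iterComm X Y t‖ + ‖iterComm X Y t‖ * ‖X‖ :=
          add_le_add (norm_mul_le _ _) (norm_mul_le _ _)
      _ = 2 * ‖X‖ * ‖iterComm X Y t‖ := by ring
      _ ≤ 2 * ‖X‖ * ((2 * ‖X‖) ^ t * ‖Y‖) := mul_le_mul_of_nonneg_left ih h0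
      _ = (2 * ‖X‖) ^ (t+1) * ‖Y‖ := by ring

lemma my_norm_mul3_le {M : ℕ} {A B C : Matrix (Fin M) (Fin M) ℂ} {a b c : ℝ}
    (hA : ‖A‖ ≤ a) (hB : ‖B‖ ≤ b) (hC : ‖C‖ ≤ c) : ‖A * B * C‖ ≤ a * b * c := by
  have hab : ‖A * B‖ ≤ a * b :=
    le_trans (norm_mul_le _ _) (mul_le_mul hA hB (norm_nonneg B) ((norm_nonneg A).trans hA))
  exact le_trans (norm_mul_le _ _)
    (mul_le_mul hab hC (norm_nonneg C) ((norm_nonneg _).trans hab))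

lemma proj_norm_le_one {M : ℕ} (Q : Matrix (Fin M) (Fin M) ℂ)
    (h1 : Q * Q = Q) (h2 : Q.conjTranspose = Q) : ‖Q‖ ≤ 1 := by
  have h := Matrix.l2_opNorm_conjTranspose_mul_self Q
  rw [h2, h1] at h
  nlinarith [norm_nonneg Q]

lemma exp_thirteen_twelfths_le_three : Real.exp (13/12 : ℝ) ≤ 3 := by
  have h1 : Real.exp (13/12 : ℝ) = Real.exp 1 * Real.exp (1/12 : ℝ) := by
    rw [← Real.exp_add]; norm_num
  have hpos := Real.exp_pos (1/12 : ℝ)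
  have h2 : Real.exp (1/12 : ℝ) ≤ 12/11 := by
    have h := Real.add_one_le_exp (-(1/12) : ℝ)
    rw [Real.exp_neg] at h
    have h4 : (Real.exp (1/12 : ℝ))⁻¹ * Real.exp (1/12 : ℝ) = 1 :=
      inv_mul_cancel₀ (ne_of_gt hpos)
    nlinarith [mul_le_mul_of_nonneg_right h (le_of_lt hpos)]
  have h3 := Real.exp_one_lt_d9
  have h5 := mul_le_mul (le_of_lt h3) h2 (le_of_lt hpos) (by norm_num)
  rw [h1]
  nlinarith

set_option maxHeartbeats 1000000 in
/-- Conditional core of the nested-commutator tail bound: under projector and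
leakage hypotheses for `X`, and smallness of the discretization error
`Δ = [X,[X,Y]] - cX` on the medium-energy subspace, the tail series
`∑_{t ≥ 3} (1/t!)[X,Y]_t` converges and its projection has small norm. -/
theorem nested_commutator_tail_bound {M : ℕ}
    (X Y Δ P P' : Matrix (Fin M) (Fin M) ℂ) (c : ℂ)
    (hP : P * P = P) (hPadj : P.conjTranspose = P)
    (hP' : P' * P' = P') (hP'adj : P'.conjTranspose = P')
    (R B ε ε' : ℝ) (T₀ : ℕ)
    (hR : 1 ≤ R) (hB : 0 ≤ B) (hε0 : 0 < ε) (hε1 : ε ≤ 1)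
    (hε'0 : 0 ≤ ε') (hε'ε : ε' ≤ ε) (hT₀ : 6 * R ≤ (T₀ : ℝ))
    (hXY : iterComm X Y 2 = Δ + c • X)
    (h1 : ∀ s : ℕ, ‖P * X ^ s‖ ≤ R ^ s)
    (h2 : ∀ s : ℕ, ‖X ^ s * P‖ ≤ R ^ s)
    (h3 : ∀ s ≤ T₀, ‖P * X ^ s * (1 - P')‖ ≤ ε)
    (h4 : ∀ s ≤ T₀, ‖(1 - P') * X ^ s * P‖ ≤ ε)
    (h5 : ‖P' * Δ * P'‖ ≤ ε')
    (h6 : ‖Δ‖ ≤ B) :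
    Summable (fun t : ℕ =>
      if 3 ≤ t then ((t.factorial : ℝ))⁻¹ • iterComm X Y t else 0) ∧
    ‖P * (∑' t : ℕ,
        if 3 ≤ t then ((t.factorial : ℝ))⁻¹ • iterComm X Y t else 0) * P‖ ≤
      (3 * B + 1) * (Real.exp (2 * R) * ε + Real.exp (-R / 2)) := by
  have hR0 : (0:ℝ) < R := lt_of_lt_of_le one_pos hR
  have hP1 : ‖P‖ ≤ 1 := proj_norm_le_one P hP hPadj
  have hP'1 : ‖P'‖ ≤ 1 := proj_norm_le_one P' hP' hP'adj
  -- summability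
  set f : ℕ → Matrix (Fin M) (Fin M) ℂ :=
    fun t => if 3 ≤ t then ((t.factorial : ℝ))⁻¹ • iterComm X Y t else 0 with hfdef
  have hnf : ∀ t, ‖f t‖ ≤ (2*‖X‖)^t / t.factorial * ‖Y‖ := by
    intro t
    by_cases ht : 3 ≤ t
    · simp only [hfdef, if_pos ht]
      rw [norm_smul, Real.norm_eq_abs, abs_of_nonneg (by positivity)]
      calc ((t.factorial : ℝ))⁻¹ * ‖iterComm X Y t‖
          ≤ ((t.factorial : ℝ))⁻¹ * ((2*‖X‖)^t * ‖Y‖) :=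
            mul_le_mul_of_nonneg_left (iterComm_norm_le X Y t) (by positivity)
        _ = (2*‖X‖)^t / t.factorial * ‖Y‖ := by ring
    · simp only [hfdef, if_neg ht]
      rw [norm_zero]
      positivity
  have hmaj : Summable (fun t : ℕ => (2*‖X‖)^t / t.factorial * ‖Y‖) :=
    (Real.summable_pow_div_factorial (2*‖X‖)).mul_right ‖Y‖
  have hsum_norm : Summable (fun t => ‖f t‖) :=
    Summable.of_nonneg_of_le (fun t => norm_nonneg _) hnf hmaj
  have hsum : Summable f := hsum_norm.of_norm
  refine ⟨hsum, ?_⟩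
  -- helpers
  have hPXP : ∀ A : Matrix (Fin M) (Fin M) ℂ, ‖P * A * P‖ ≤ ‖A‖ := by
    intro A
    calc ‖P * A * P‖ ≤ 1 * ‖A‖ * 1 := my_norm_mul3_le hP1 (le_refl _) hP1
      _ = ‖A‖ := by ring
  have hshift : ∀ k : ℕ, iterComm X Y (k+3) = iterComm X Δ (k+1) := by
    intro k
    induction k with
    | zero =>
      show X * iterComm X Y 2 - iterComm X Y 2 * X = X * Δ - Δ * X
      rw [hXY, mul_add, add_mul, mul_smul_comm, smul_mul_assoc]
      abel
    | succ k ih =>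
      show X * iterComm X Y (k+3) - iterComm X Y (k+3) * X
          = X * iterComm X Δ (k+1) - iterComm X Δ (k+1) * X
      rw [ih]
  have hpow_le : ∀ {a b : ℕ}, a ≤ b → R ^ a ≤ R ^ b := fun h => pow_le_pow_right₀ hR h
  have perGlob : ∀ j k : ℕ, j ≤ k → ‖P * (X^j * Δ * X^(k-j)) * P‖ ≤ B * R^k := by
    intro j k hjk
    have hre : P * (X^j * Δ * X^(k-j)) * P = (P * X^j) * Δ * (X^(k-j) * P) := by
      noncomm_ring
    rw [hre]
    have h := my_norm_mul3_le (h1 j) h6 (h2 (k-j))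
    have hp : R^j * B * R^(k-j) = B * R^k := by
      rw [mul_comm (R^j) B, mul_assoc, ← pow_add]
      congr 2
      omega
    rw [hp] at h
    exact h
  have perGood : ∀ j k : ℕ, j ≤ k → k ≤ T₀ →
      ‖P * (X^j * Δ * X^(k-j)) * P‖ ≤ (2*B+1)*ε*R^k := by
    intro j k hjk hkT
    have hsplit : P * (X^j * Δ * X^(k-j)) * P
        = (P * X^j * (1 - P')) * Δ * (X^(k-j) * P)
        + (P * X^j) * (P' * Δ * P') * (X^(k-j) * P)
        + (P * X^j * P') * Δ * ((1 - P') * X^(k-j) * P) := by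
      noncomm_ring
    have ht1 : ‖(P * X^j * (1 - P')) * Δ * (X^(k-j) * P)‖ ≤ ε * B * R^k :=
      my_norm_mul3_le (h3 j (le_trans hjk hkT)) h6
        ((h2 (k-j)).trans (hpow_le (Nat.sub_le k j)))
    have ht2 : ‖(P * X^j) * (P' * Δ * P') * (X^(k-j) * P)‖ ≤ ε * R^k := by
      have h := my_norm_mul3_le (h1 j) (h5.trans hε'ε) (h2 (k-j))
      calc ‖(P * X^j) * (P' * Δ * P') * (X^(k-j) * P)‖ ≤ R^j * ε * R^(k-j) := h
        _ = ε * (R^j * R^(k-j)) := by ring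
        _ = ε * R^k := by rw [← pow_add]; congr 2; omega
    have ht3 : ‖(P * X^j * P') * Δ * ((1 - P') * X^(k-j) * P)‖ ≤ R^k * B * ε := by
      have hPX' : ‖P * X^j * P'‖ ≤ R^k := by
        have ha := norm_mul_le (P * X^j) P'
        have hb : ‖P * X^j‖ * ‖P'‖ ≤ R^j * 1 :=
          mul_le_mul (h1 j) hP'1 (norm_nonneg _) (by positivity)
        calc ‖P * X^j * P'‖ ≤ R^j * 1 := le_trans ha hb
          _ = R^j := mul_one _
          _ ≤ R^k := hpow_le hjk
      exact my_norm_mul3_le hPX' h6 (h4 (k-j) (le_trans (Nat.sub_le k j) hkT))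
    rw [hsplit]
    have hfin := norm_add_le
      ((P * X^j * (1 - P')) * Δ * (X^(k-j) * P) + (P * X^j) * (P' * Δ * P') * (X^(k-j) * P))
      ((P * X^j * P') * Δ * ((1 - P') * X^(k-j) * P))
    have hfin2 := norm_add_le
      ((P * X^j * (1 - P')) * Δ * (X^(k-j) * P))
      ((P * X^j) * (P' * Δ * P') * (X^(k-j) * P))
    have heq : ε*B*R^k + ε*R^k + R^k*B*ε = (2*B+1)*ε*R^k := by ring
    linarith
  have hexpand : ∀ (k:ℕ) (C : ℝ), (∀ j, j ≤ k → ‖P * (X^j * Δ * X^(k-j)) * P‖ ≤ C) →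
      ‖P * iterComm X Δ k * P‖ ≤ 2^k * C := by
    intro k C hterm
    rw [iterComm_eq_sum_s11, Finset.mul_sum, Finset.sum_mul]
    refine le_trans (norm_sum_le _ _) ?_
    have hterm' : ∀ j ∈ Finset.range (k+1),
        ‖P * (((-1:ℂ)^(k-j) * (k.choose j : ℂ)) • (X^j * Δ * X^(k-j))) * P‖
          ≤ (k.choose j : ℝ) * C := by
      intro j hj
      simp only [Finset.mem_range, Nat.lt_succ_iff] at hj
      rw [mul_smul_comm, smul_mul_assoc, norm_smul]
      have hcoef : ‖(-1:ℂ)^(k-j) * (k.choose j : ℂ)‖ = (k.choose j : ℝ) := by simp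
      rw [hcoef]
      exact mul_le_mul_of_nonneg_left (hterm j hj) (Nat.cast_nonneg _)
    refine le_trans (Finset.sum_le_sum hterm') ?_
    rw [← Finset.sum_mul]
    have hch : (∑ j ∈ Finset.range (k+1), (k.choose j : ℝ)) = 2^k := by
      exact_mod_cast Nat.sum_range_choose k
    rw [hch]
  -- move P inside the tsum
  have hg_le : ∀ t, ‖P * f t * P‖ ≤ ‖f t‖ := fun t => hPXP (f t)
  have hg_sum : Summable (fun t => ‖P * f t * P‖) :=
    Summable.of_nonneg_of_le (fun t => norm_nonneg _) hg_le hsum_norm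
  have hmove : P * (∑' t, f t) * P = ∑' t, P * f t * P := by
    have h := (ContinuousLinearMap.mulLeftRight ℂ (Matrix (Fin M) (Fin M) ℂ) P P).map_tsum hsum
    simpa [ContinuousLinearMap.mulLeftRight_apply] using h
  rw [hmove]
  refine le_trans (norm_tsum_le_tsum_norm hg_sum) ?_
  set g : ℕ → ℝ := fun t => ‖P * f t * P‖ with hgdef
  have hgval : ∀ k : ℕ, g (k+3) = (((k+3).factorial : ℝ))⁻¹ * ‖P * iterComm X Δ (k+1) * P‖ := by
    intro k
    have h3k : 3 ≤ k + 3 := by omega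
    simp only [hgdef, hfdef, if_pos h3k]
    rw [hshift k, mul_smul_comm, smul_mul_assoc, norm_smul, Real.norm_eq_abs,
      abs_of_nonneg (by positivity)]
  have hg3sum : Summable (fun k => g (k+3)) := (summable_nat_add_iff 3).mpr hg_sum
  have hsplit0 : ∑' t, g t = ∑' k, g (k+3) := by
    rw [← Summable.sum_add_tsum_nat_add 3 hg_sum]
    have hz : ∑ i ∈ Finset.range 3, g i = 0 := by
      apply Finset.sum_eq_zero
      intro i hi
      simp only [Finset.mem_range] at hi
      have hfi : f i = 0 := by
        simp only [hfdef]
        rw [if_neg (show ¬ 3 ≤ i by omega)]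
      simp [hgdef, hfi]
    rw [hz, zero_add]
  rw [hsplit0, ← Summable.sum_add_tsum_nat_add T₀ hg3sum]
  -- Part A : the medium-range sum
  have hc1 : (0:ℝ) ≤ (2*B+1)*ε := by nlinarith
  have goodBound : ∀ k, k < T₀ →
      g (k+3) ≤ (2*B+1)*ε * ((2*R)^(k+1)/(((k+1).factorial : ℝ))) := by
    intro k hk
    have hnb : ‖P * iterComm X Δ (k+1) * P‖ ≤ 2^(k+1) * ((2*B+1)*ε*R^(k+1)) :=
      hexpand (k+1) _ (fun j hj => perGood j (k+1) hj (by omega))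
    rw [hgval k]
    have hmon : (((k+1).factorial : ℝ)) ≤ (((k+3).factorial : ℝ)) := by
      exact_mod_cast Nat.factorial_le (by omega)
    have hpos1 : (0:ℝ) < (((k+1).factorial : ℝ)) := by positivity
    have hnn : (0:ℝ) ≤ 2^(k+1) * ((2*B+1)*ε*R^(k+1)) := by
      apply mul_nonneg (by positivity)
      rw [show (2*B+1)*ε*R^(k+1) = ((2*B+1)*ε)*R^(k+1) from by ring]
      exact mul_nonneg hc1 (by positivity)
    calc (((k+3).factorial : ℝ))⁻¹ * ‖P * iterComm X Δ (k+1) * P‖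
        ≤ (((k+3).factorial : ℝ))⁻¹ * (2^(k+1) * ((2*B+1)*ε*R^(k+1))) :=
          mul_le_mul_of_nonneg_left hnb (by positivity)
      _ ≤ (((k+1).factorial : ℝ))⁻¹ * (2^(k+1) * ((2*B+1)*ε*R^(k+1))) :=
          mul_le_mul_of_nonneg_right (inv_anti₀ hpos1 hmon) hnn
      _ = (2*B+1)*ε * ((2*R)^(k+1)/(((k+1).factorial : ℝ))) := by
          rw [mul_pow]
          field_simp
  have partA : ∑ k ∈ Finset.range T₀, g (k+3) ≤ (2*B+1)*ε * Real.exp (2*R) := by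
    have hs : ∑ k ∈ Finset.range T₀, g (k+3)
        ≤ ∑ k ∈ Finset.range T₀, (2*B+1)*ε * ((2*R)^(k+1)/(((k+1).factorial : ℝ))) :=
      Finset.sum_le_sum (fun k hk => goodBound k (Finset.mem_range.mp hk))
    have hexps : ∑ k ∈ Finset.range T₀, (2*R)^(k+1)/(((k+1).factorial : ℝ)) ≤ Real.exp (2*R) := by
      have h := Real.sum_le_exp_of_nonneg (by linarith : (0:ℝ) ≤ 2*R) (T₀+1)
      rw [Finset.sum_range_succ'] at h
      simp only [pow_zero, Nat.factorial_zero, Nat.cast_one, div_one] at h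
      linarith
    calc ∑ k ∈ Finset.range T₀, g (k+3) ≤ _ := hs
      _ = (2*B+1)*ε * ∑ k ∈ Finset.range T₀, (2*R)^(k+1)/(((k+1).factorial : ℝ)) := by
          rw [Finset.mul_sum]
      _ ≤ (2*B+1)*ε * Real.exp (2*R) := mul_le_mul_of_nonneg_left hexps hc1
  -- Part B : the tail
  set N := T₀ + 1 with hNdef
  have hNR : 6*R ≤ (N:ℝ) := by rw [hNdef]; push_cast; linarith
  have hN6 : (6:ℝ) ≤ (N:ℝ) := by nlinarith
  have hstep : ∀ j : ℕ, g (j + T₀ + 3) ≤ B * ((2*R)^N/((N.factorial : ℝ))) * (1/3)^j := by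
    intro j
    have hkey : g (j + T₀ + 3) ≤ B * ((2*R)^(N+j)/(((N+j).factorial : ℝ))) := by
      have hglob : ‖P * iterComm X Δ (j + T₀ + 1) * P‖ ≤ 2^(j+T₀+1) * (B * R^(j+T₀+1)) :=
        hexpand _ _ (fun i hi => perGlob i _ hi)
      have hgv := hgval (j + T₀)
      rw [show j + T₀ + 3 = (j + T₀) + 3 from rfl, hgv]
      have hmon : (((N+j).factorial : ℝ)) ≤ (((j+T₀+3).factorial : ℝ)) := by
        exact_mod_cast Nat.factorial_le (by omega)
      have hpos : (0:ℝ) < (((N+j).factorial : ℝ)) := by positivity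
      have hBR : (0:ℝ) ≤ 2^(j+T₀+1) * (B * R^(j+T₀+1)) :=
        mul_nonneg (by positivity) (mul_nonneg hB (by positivity))
      calc (((j+T₀+3).factorial : ℝ))⁻¹ * ‖P * iterComm X Δ ((j+T₀)+1) * P‖
          ≤ (((j+T₀+3).factorial : ℝ))⁻¹ * (2^(j+T₀+1) * (B * R^(j+T₀+1))) :=
            mul_le_mul_of_nonneg_left hglob (by positivity)
        _ ≤ (((N+j).factorial : ℝ))⁻¹ * (2^(j+T₀+1) * (B * R^(j+T₀+1))) :=
            mul_le_mul_of_nonneg_right (inv_anti₀ hpos hmon) hBR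
        _ = B * ((2*R)^(N+j)/(((N+j).factorial : ℝ))) := by
            rw [show N + j = j + T₀ + 1 from by omega, mul_pow]
            field_simp
    refine hkey.trans ?_
    have hfac : ((N.factorial : ℝ)) * ((N:ℝ)+1)^j ≤ (((N+j).factorial : ℝ)) := by
      have h := Nat.factorial_mul_pow_le_factorial (m := N) (n := j)
      exact_mod_cast h
    have hq : (2*R)/((N:ℝ)+1) ≤ 1/3 := by
      rw [div_le_div_iff₀ (by positivity) (by norm_num)]
      linarith
    have hchain : (2*R)^(N+j)/(((N+j).factorial : ℝ))
        ≤ (2*R)^N/((N.factorial : ℝ)) * (1/3)^j := by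
      have hd1 : (2*R)^(N+j)/(((N+j).factorial : ℝ))
          ≤ (2*R)^(N+j)/(((N.factorial : ℝ)) * ((N:ℝ)+1)^j) := by
        rw [div_le_div_iff₀ (by positivity) (by positivity)]
        exact mul_le_mul_of_nonneg_left hfac (by positivity)
      have hd2 : (2*R)^(N+j)/(((N.factorial : ℝ)) * ((N:ℝ)+1)^j)
          = (2*R)^N/((N.factorial : ℝ)) * ((2*R)/((N:ℝ)+1))^j := by
        rw [pow_add, div_pow]
        field_simp
        try ring
      have hd3 : ((2*R)/((N:ℝ)+1))^j ≤ (1/3)^j := pow_le_pow_left₀ (by positivity) hq j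
      calc (2*R)^(N+j)/(((N+j).factorial : ℝ)) ≤ _ := hd1
        _ = _ := hd2
        _ ≤ (2*R)^N/((N.factorial : ℝ)) * (1/3)^j :=
            mul_le_mul_of_nonneg_left hd3 (by positivity)
    calc B * ((2*R)^(N+j)/(((N+j).factorial : ℝ)))
        ≤ B * ((2*R)^N/((N.factorial : ℝ)) * (1/3)^j) := mul_le_mul_of_nonneg_left hchain hB
      _ = B * ((2*R)^N/((N.factorial : ℝ))) * (1/3)^j := by ring
  have hgeo_sum : Summable (fun j : ℕ => B * ((2*R)^N/((N.factorial : ℝ))) * (1/3)^j) :=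
    (summable_geometric_of_lt_one (by norm_num) (by norm_num)).mul_left _
  have htail_sum : Summable (fun j : ℕ => g (j + T₀ + 3)) :=
    (summable_nat_add_iff T₀).mpr hg3sum
  have partB : ∑' j, g (j + T₀ + 3) ≤ B * ((2*R)^N/((N.factorial : ℝ))) * (3/2) := by
    have h := Summable.tsum_le_tsum hstep htail_sum hgeo_sum
    have hgeo : ∑' j : ℕ, B * ((2*R)^N/((N.factorial : ℝ))) * (1/3)^j
        = B * ((2*R)^N/((N.factorial : ℝ))) * (3/2) := by
      rw [tsum_mul_left, tsum_geometric_of_lt_one (by norm_num) (by norm_num)]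
      norm_num
    rw [hgeo] at h
    exact h
  -- numeric bound : (2R)^N / N! ≤ exp (-R/2)
  have hexp1N : Real.exp 1 ^ N = Real.exp (N:ℝ) := by
    rw [← Real.exp_nat_mul, mul_one]
  have hstir : ((N:ℝ))^N ≤ ((N.factorial : ℝ)) * Real.exp (N:ℝ) := by
    have h := Real.pow_div_factorial_le_exp (x := (N:ℝ)) (by positivity) N
    rw [div_le_iff₀ (by positivity)] at h
    exact h.trans_eq (mul_comm _ _)
  have h13 : (2*R)^N/((N.factorial : ℝ)) ≤ (Real.exp 1/3)^N := by
    rw [div_pow, div_le_div_iff₀ (by positivity) (by positivity)]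
    have h6' : (2*R)*3 ≤ (N:ℝ) := by linarith
    calc (2*R)^N * 3^N = ((2*R)*3)^N := (mul_pow _ _ _).symm
      _ ≤ ((N:ℝ))^N := pow_le_pow_left₀ (by linarith) h6' N
      _ ≤ ((N.factorial : ℝ)) * Real.exp (N:ℝ) := hstir
      _ = Real.exp 1 ^ N * ((N.factorial : ℝ)) := by rw [hexp1N]; ring
  have h23 : (Real.exp 1/3)^N ≤ Real.exp (-R/2) := by
    have hkey : Real.exp ((N:ℝ) + R/2) ≤ 3^N := by
      have ha : (N:ℝ) + R/2 ≤ (N:ℝ) * (13/12) := by linarith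
      calc Real.exp ((N:ℝ) + R/2) ≤ Real.exp ((N:ℝ) * (13/12)) := Real.exp_le_exp.mpr ha
        _ = Real.exp (13/12) ^ N := Real.exp_nat_mul _ N
        _ ≤ 3^N := pow_le_pow_left₀ (Real.exp_nonneg _) exp_thirteen_twelfths_le_three N
    rw [div_pow, div_le_iff₀ (by positivity), hexp1N]
    have hsplitE : Real.exp ((N:ℝ) + R/2) = Real.exp (N:ℝ) * Real.exp (R/2) := Real.exp_add _ _
    have h2 : Real.exp (N:ℝ) * Real.exp (R/2) * Real.exp (-R/2) ≤ 3^N * Real.exp (-R/2) :=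
      mul_le_mul_of_nonneg_right (hsplitE ▸ hkey) (Real.exp_pos _).le
    have h3' : Real.exp (N:ℝ) * Real.exp (R/2) * Real.exp (-R/2) = Real.exp (N:ℝ) := by
      rw [mul_assoc, ← Real.exp_add, show R/2 + -R/2 = 0 by ring, Real.exp_zero, mul_one]
    linarith [h2, h3']
  have hRN : (2*R)^N/((N.factorial : ℝ)) ≤ Real.exp (-R/2) := h13.trans h23
  -- final combination
  have hEp := Real.exp_pos (2*R)
  have hEm := Real.exp_pos (-R/2)
  have hA2 : (2*B+1)*ε*Real.exp (2*R) ≤ (3*B+1)*(Real.exp (2*R)*ε) := by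
    nlinarith [mul_nonneg hB (mul_nonneg hε0.le hEp.le)]
  have hB1 : B * ((2*R)^N/((N.factorial : ℝ))) * (3/2) ≤ B * Real.exp (-R/2) * (3/2) := by
    nlinarith [mul_le_mul_of_nonneg_left hRN hB]
  have hB2 : B * Real.exp (-R/2) * (3/2) ≤ (3*B+1)*Real.exp (-R/2) := by
    nlinarith [mul_nonneg hB hEm.le, hEm.le]
  have hdist : (3*B+1)*(Real.exp (2*R)*ε + Real.exp (-R/2))
      = (3*B+1)*(Real.exp (2*R)*ε) + (3*B+1)*Real.exp (-R/2) := by ring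
  linarith [partA, partB]
end

section
/- Fix a positive even integer M with M ≥ 4, and let x̄, F, p̄ be the discretized position operator, the centered discrete Fourier transform, and the discretized momentum operator, respectively. Define the discretization error Δ = x̄⁴·p̄² − 2·x̄²·p̄²·x̄² + p̄²·x̄⁴ − 8i·x̄². Then ‖Δ‖ ≤ 17·M³. -/
open scoped Matrix.Norms.L2Operator

/-- The discretized position operator: the `M × M` diagonal matrix with entries
`√(2π/M)·(j - M/2)`. -/
noncomputable def xop (M : ℕ) : Matrix (Fin M) (Fin M) ℂ :=
  Matrix.diagonal fun j => ((Real.sqrt (2 * Real.pi / M) * ((j : ℝ) - M / 2) : ℝ) : ℂ)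

/-- The centered discrete Fourier transform, with entries
`M^{-1/2}·exp(2πi(j - M/2)(k - M/2)/M)`. -/
noncomputable def cdft (M : ℕ) : Matrix (Fin M) (Fin M) ℂ :=
  Matrix.of fun j k => (Real.sqrt M : ℂ)⁻¹ *
    Complex.exp (2 * Real.pi * Complex.I * ((j : ℂ) - M / 2) * ((k : ℂ) - M / 2) / M)

/-- The discretized momentum operator `p̄ = F* x̄ F`. -/
noncomputable def pop (M : ℕ) : Matrix (Fin M) (Fin M) ℂ :=
  (cdft M).conjTranspose * xop M * cdft M

open Matrix Complex

/-- Bound on the `ℓ²` operator norm of a diagonal matrix. -/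
lemma diag_opNorm_le {M : ℕ} (v : Fin M → ℂ) (c : ℝ) (hc : 0 ≤ c)
    (h : ∀ j, ‖v j‖ ≤ c) : ‖Matrix.diagonal v‖ ≤ c := by
  rw [Matrix.l2_opNorm_def]
  refine ContinuousLinearMap.opNorm_le_bound _ hc fun x => ?_
  show ‖(EuclideanSpace.equiv (Fin M) ℂ).symm ((Matrix.diagonal v) *ᵥ x)‖ ≤ c * ‖x‖
  rw [EuclideanSpace.norm_eq, EuclideanSpace.norm_eq]
  have key : ∀ i, ‖((EuclideanSpace.equiv (Fin M) ℂ).symm ((Matrix.diagonal v) *ᵥ x)) i‖ ^ 2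
      ≤ c ^ 2 * ‖x i‖ ^ 2 := by
    intro i
    have hi : ((EuclideanSpace.equiv (Fin M) ℂ).symm ((Matrix.diagonal v) *ᵥ x)) i
        = v i * x i := Matrix.mulVec_diagonal v x i
    rw [hi, norm_mul, mul_pow]
    have := h i
    have h2 : ‖v i‖ ^ 2 ≤ c ^ 2 := by nlinarith [norm_nonneg (v i)]
    nlinarith [norm_nonneg (x i), sq_nonneg (‖x i‖)]
  calc Real.sqrt (∑ i, ‖((EuclideanSpace.equiv (Fin M) ℂ).symm ((Matrix.diagonal v) *ᵥ x)) i‖ ^ 2)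
      ≤ Real.sqrt (∑ i, c ^ 2 * ‖x i‖ ^ 2) :=
        Real.sqrt_le_sqrt (Finset.sum_le_sum fun i _ => key i)
    _ = c * Real.sqrt (∑ i, ‖x i‖ ^ 2) := by
        rw [← Finset.mul_sum, Real.sqrt_mul (sq_nonneg c), Real.sqrt_sq hc]

/-- The centered discrete Fourier transform is unitary. -/
lemma cdft_unitary (M : ℕ) (hM : 0 < M) : (cdft M)ᴴ * cdft M = 1 := by
  have hMR : (0:ℝ) < M := by exact_mod_cast hM
  have hMC : (M:ℂ) ≠ 0 := by exact_mod_cast hM.ne'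
  have hsq : ((Real.sqrt M : ℝ) : ℂ)⁻¹ * ((Real.sqrt M : ℝ) : ℂ)⁻¹ = (M:ℂ)⁻¹ := by
    rw [← mul_inv]
    congr 1
    rw [← Complex.ofReal_mul, Real.mul_self_sqrt hMR.le]
    push_cast
    ring
  ext k l
  set c : ℂ := 2 * Real.pi * Complex.I * ((l:ℂ) - (k:ℂ)) / M with hc
  have key : ∀ j : Fin M, star (cdft M j k) * cdft M j l
      = (M:ℂ)⁻¹ * (Complex.exp c ^ (j:ℕ) * Complex.exp (-(c * (M/2)))) := by
    intro j
    simp only [cdft, of_apply, star_mul', RCLike.star_def]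
    rw [← Complex.exp_conj]
    have hstar : (starRingEnd ℂ) (2 * Real.pi * Complex.I * ((j:ℂ) - M/2) * ((k:ℂ) - M/2) / M)
        = -(2 * Real.pi * Complex.I * ((j:ℂ) - M/2) * ((k:ℂ) - M/2) / M) := by
      simp only [map_div₀, _root_.map_mul, map_sub, Complex.conj_I, Complex.conj_natCast,
        Complex.conj_ofReal, map_ofNat]
      ring
    rw [hstar]
    have hstar2 : (starRingEnd ℂ) (((Real.sqrt M : ℝ) : ℂ)⁻¹) = ((Real.sqrt M : ℝ) : ℂ)⁻¹ := by
      rw [map_inv₀, Complex.conj_ofReal]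
    rw [hstar2]
    rw [mul_mul_mul_comm, hsq, ← Complex.exp_add]
    congr 1
    rw [← Complex.exp_nat_mul, ← Complex.exp_add]
    congr 1
    rw [hc]
    field_simp
    ring
  rw [Matrix.mul_apply]
  simp only [Matrix.conjTranspose_apply]
  rw [Finset.sum_congr rfl fun j _ => key j]
  rw [← Finset.mul_sum, ← Finset.sum_mul]
  by_cases hkl : k = l
  · subst hkl
    have hc0 : c = 0 := by simp [hc]
    simp [hc0, Matrix.one_apply_eq, Finset.card_univ]
    field_simp
  · set d : ℤ := (l:ℤ) - (k:ℤ) with hd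
    have hdC : (d:ℂ) = (l:ℂ) - (k:ℂ) := by push_cast [hd]; ring
    have hcM : Complex.exp c ^ M = 1 := by
      rw [← Complex.exp_nat_mul]
      have : (M:ℂ) * c = d * (2 * Real.pi * Complex.I) := by
        rw [hc, hdC]; field_simp
      rw [this]
      exact_mod_cast Complex.exp_int_mul_two_pi_mul_I d
    have hd0 : d ≠ 0 := by
      have hne : (l:ℕ) ≠ (k:ℕ) := fun h => hkl (Fin.ext h.symm)
      simp only [hd, sub_ne_zero]
      exact_mod_cast hne
    have hdlt : d < M := by have := l.isLt; omega
    have hdgt : -(M:ℤ) < d := by have := k.isLt; omega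
    have hc1 : Complex.exp c ≠ 1 := by
      intro h
      obtain ⟨n, hn⟩ := Complex.exp_eq_one_iff.mp h
      rw [hc, ← hdC] at hn
      have h2 : (2:ℂ) * Real.pi * Complex.I ≠ 0 := by
        simp [Real.pi_ne_zero, Complex.I_ne_zero, Complex.ofReal_ne_zero]
      have hn' : (d:ℂ) = n * M := by
        field_simp [hMC] at hn
        apply mul_left_cancel₀ h2
        linear_combination (2 * Real.pi * Complex.I) * hn
      have hnZ : d = n * M := by exact_mod_cast hn'
      rcases lt_trichotomy n 0 with h'|h'|h'
      · have : n ≤ -1 := by omega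
        nlinarith
      · rw [h', zero_mul] at hnZ; exact hd0 hnZ
      · have : 1 ≤ n := h'
        nlinarith
    have hsum : ∑ j : Fin M, Complex.exp c ^ (j:ℕ) = 0 := by
      rw [Fin.sum_univ_eq_sum_range (fun j => Complex.exp c ^ j) M]
      rw [geom_sum_eq hc1, hcM]
      simp
    rw [hsum, zero_mul, mul_zero]
    exact (Matrix.one_apply_ne hkl).symm

lemma cdft_norm_le (M : ℕ) (hM : 0 < M) : ‖cdft M‖ ≤ 1 := by
  have : Nonempty (Fin M) := ⟨⟨0, hM⟩⟩
  have h1 : ‖(cdft M)ᴴ * cdft M‖ = ‖cdft M‖ * ‖cdft M‖ :=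
    Matrix.l2_opNorm_conjTranspose_mul_self _
  rw [cdft_unitary M hM, norm_one] at h1
  nlinarith [norm_nonneg (cdft M)]

lemma xop_norm_le (M : ℕ) (hM : 0 < M) :
    ‖xop M‖ ≤ Real.sqrt (Real.pi * M / 2) := by
  have hMR : (0:ℝ) < M := by exact_mod_cast hM
  refine diag_opNorm_le _ _ (Real.sqrt_nonneg _) fun j => ?_
  rw [Complex.norm_real, Real.norm_eq_abs, abs_mul,
    _root_.abs_of_nonneg (Real.sqrt_nonneg _)]
  have hj : |((j:ℕ):ℝ) - (M:ℝ)/2| ≤ (M:ℝ)/2 := by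
    have h1 : (0:ℝ) ≤ ((j:ℕ):ℝ) := Nat.cast_nonneg _
    have h2 : ((j:ℕ):ℝ) < (M:ℝ) := by exact_mod_cast j.isLt
    rw [abs_le]; constructor <;> linarith
  have hstep : Real.sqrt (2 * Real.pi / M) * |((j:ℕ):ℝ) - (M:ℝ)/2|
      ≤ Real.sqrt (2 * Real.pi / M) * ((M:ℝ)/2) :=
    mul_le_mul_of_nonneg_left hj (Real.sqrt_nonneg _)
  refine hstep.trans (le_of_eq ?_)
  rw [show Real.pi * M / 2 = (2 * Real.pi / M) * ((M:ℝ)/2)^2 by field_simp,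
    Real.sqrt_mul (by positivity), Real.sqrt_sq (by positivity)]

set_option maxHeartbeats 1000000 in
lemma pop_norm_le (M : ℕ) (hM : 0 < M) : ‖pop M‖ ≤ ‖xop M‖ := by
  have hF : ‖cdft M‖ ≤ 1 := cdft_norm_le M hM
  have hFt : ‖(cdft M)ᴴ‖ ≤ 1 := by rw [Matrix.l2_opNorm_conjTranspose]; exact hF
  calc ‖pop M‖ = ‖(cdft M)ᴴ * xop M * cdft M‖ := rfl
    _ ≤ ‖(cdft M)ᴴ * xop M‖ * ‖cdft M‖ := Matrix.l2_opNorm_mul _ _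
    _ ≤ ‖(cdft M)ᴴ‖ * ‖xop M‖ * ‖cdft M‖ :=
        mul_le_mul_of_nonneg_right (Matrix.l2_opNorm_mul _ _) (norm_nonneg _)
    _ ≤ 1 * ‖xop M‖ * 1 := by gcongr
    _ = ‖xop M‖ := by ring

set_option maxHeartbeats 2000000 in
/-- Norm bound on the discretization error
`Δ = x̄⁴p̄² - 2x̄²p̄²x̄² + p̄²x̄⁴ - 8i·x̄²`: one has `‖Δ‖ ≤ 17·M³`. -/
theorem delta_norm_bound (M : ℕ) (hM : Even M) (hM4 : 4 ≤ M) :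
    ‖xop M ^ 4 * pop M ^ 2 - 2 • (xop M ^ 2 * pop M ^ 2 * xop M ^ 2) +
        pop M ^ 2 * xop M ^ 4 - (8 * Complex.I) • xop M ^ 2‖ ≤ 17 * (M : ℝ) ^ 3 := by
  have hM0 : 0 < M := by omega
  have hMR : (4:ℝ) ≤ (M:ℝ) := by exact_mod_cast hM4
  set s : ℝ := Real.sqrt (Real.pi * M / 2) with hs
  have hs0 : 0 ≤ s := Real.sqrt_nonneg _
  have hs2 : s ^ 2 = Real.pi * M / 2 := Real.sq_sqrt (by positivity)
  have hX : ‖xop M‖ ≤ s := xop_norm_le M hM0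
  have hP : ‖pop M‖ ≤ s := (pop_norm_le M hM0).trans hX
  have hX0 : (0:ℝ) ≤ ‖xop M‖ := norm_nonneg _
  have hP0 : (0:ℝ) ≤ ‖pop M‖ := norm_nonneg _
  set Q : ℝ := Real.pi * M / 2 with hQ
  have hQ0 : 0 ≤ Q := by positivity
  have h1 : ‖xop M ^ 4 * pop M ^ 2‖ ≤ Q ^ 3 := by
    calc ‖xop M ^ 4 * pop M ^ 2‖ ≤ ‖xop M ^ 4‖ * ‖pop M ^ 2‖ := norm_mul_le _ _
      _ ≤ ‖xop M‖ ^ 4 * ‖pop M‖ ^ 2 :=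
          mul_le_mul (norm_pow_le' _ (by norm_num)) (norm_pow_le' _ (by norm_num))
            (norm_nonneg _) (by positivity)
      _ ≤ s ^ 4 * s ^ 2 := by gcongr
      _ = (s ^ 2) ^ 3 := by ring
      _ = Q ^ 3 := by rw [hs2]
  have h3 : ‖pop M ^ 2 * xop M ^ 4‖ ≤ Q ^ 3 := by
    calc ‖pop M ^ 2 * xop M ^ 4‖ ≤ ‖pop M ^ 2‖ * ‖xop M ^ 4‖ := norm_mul_le _ _
      _ ≤ ‖pop M‖ ^ 2 * ‖xop M‖ ^ 4 :=
          mul_le_mul (norm_pow_le' _ (by norm_num)) (norm_pow_le' _ (by norm_num))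
            (norm_nonneg _) (by positivity)
      _ ≤ s ^ 2 * s ^ 4 := by gcongr
      _ = (s ^ 2) ^ 3 := by ring
      _ = Q ^ 3 := by rw [hs2]
  have h2 : ‖xop M ^ 2 * pop M ^ 2 * xop M ^ 2‖ ≤ Q ^ 3 := by
    calc ‖xop M ^ 2 * pop M ^ 2 * xop M ^ 2‖
        ≤ ‖xop M ^ 2 * pop M ^ 2‖ * ‖xop M ^ 2‖ := norm_mul_le _ _
      _ ≤ ‖xop M ^ 2‖ * ‖pop M ^ 2‖ * ‖xop M ^ 2‖ :=
          mul_le_mul_of_nonneg_right (norm_mul_le _ _) (norm_nonneg _)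
      _ ≤ (‖xop M‖ ^ 2) * (‖pop M‖ ^ 2) * (‖xop M‖ ^ 2) :=
          mul_le_mul (mul_le_mul (norm_pow_le' _ (by norm_num)) (norm_pow_le' _ (by norm_num))
            (norm_nonneg _) (by positivity)) (norm_pow_le' _ (by norm_num))
            (norm_nonneg _) (by positivity)
      _ ≤ s ^ 2 * s ^ 2 * s ^ 2 := by gcongr
      _ = (s ^ 2) ^ 3 := by ring
      _ = Q ^ 3 := by rw [hs2]
  have h4 : ‖(8 * Complex.I) • xop M ^ 2‖ ≤ 8 * Q := by
    rw [norm_smul]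
    simp only [norm_mul, Complex.norm_I, mul_one]
    have : ‖(8:ℂ)‖ = 8 := by norm_num
    rw [this]
    have : ‖xop M ^ 2‖ ≤ Q := by
      calc ‖xop M ^ 2‖ ≤ ‖xop M‖ ^ 2 := norm_pow_le' _ (by norm_num)
        _ ≤ s ^ 2 := by gcongr
        _ = Q := hs2
    linarith
  have htri : ‖xop M ^ 4 * pop M ^ 2 - 2 • (xop M ^ 2 * pop M ^ 2 * xop M ^ 2) +
        pop M ^ 2 * xop M ^ 4 - (8 * Complex.I) • xop M ^ 2‖
      ≤ ‖xop M ^ 4 * pop M ^ 2‖ + 2 * ‖xop M ^ 2 * pop M ^ 2 * xop M ^ 2‖ +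
        ‖pop M ^ 2 * xop M ^ 4‖ + ‖(8 * Complex.I) • xop M ^ 2‖ := by
    have e1 := norm_sub_le
      (xop M ^ 4 * pop M ^ 2 - 2 • (xop M ^ 2 * pop M ^ 2 * xop M ^ 2) + pop M ^ 2 * xop M ^ 4)
      ((8 * Complex.I) • xop M ^ 2)
    have e2 := norm_add_le
      (xop M ^ 4 * pop M ^ 2 - 2 • (xop M ^ 2 * pop M ^ 2 * xop M ^ 2)) (pop M ^ 2 * xop M ^ 4)
    have e3 := norm_sub_le (xop M ^ 4 * pop M ^ 2)
      (2 • (xop M ^ 2 * pop M ^ 2 * xop M ^ 2))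
    have e4 : ‖2 • (xop M ^ 2 * pop M ^ 2 * xop M ^ 2)‖
        ≤ 2 * ‖xop M ^ 2 * pop M ^ 2 * xop M ^ 2‖ := by
      rw [two_smul]
      calc ‖_ + _‖ ≤ ‖_‖ + ‖_‖ := norm_add_le _ _
        _ = 2 * ‖xop M ^ 2 * pop M ^ 2 * xop M ^ 2‖ := by ring
    linarith
  have hpi : Real.pi < 3.15 := Real.pi_lt_d2
  have hpi0 : 0 < Real.pi := Real.pi_pos
  have hM0' : (0:ℝ) < M := by linarith
  have hM2 : (16:ℝ) ≤ (M:ℝ) ^ 2 := by nlinarith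
  have hM3 : 16 * (M:ℝ) ≤ (M:ℝ) ^ 3 := by
    nlinarith [mul_le_mul_of_nonneg_left hM2 hM0'.le]
  have hpi3 : Real.pi ^ 3 < 31.26 := by
    have := pow_lt_pow_left₀ hpi hpi0.le (n := 3) (by norm_num)
    nlinarith
  have hQval : 4 * Q ^ 3 + 8 * Q ≤ 17 * (M:ℝ) ^ 3 := by
    have hexp : 4 * Q ^ 3 + 8 * Q
        = Real.pi ^ 3 / 2 * (M:ℝ) ^ 3 + 4 * Real.pi * (M:ℝ) := by rw [hQ]; ring
    rw [hexp]
    have hA : Real.pi ^ 3 * (M:ℝ) ^ 3 ≤ 31.26 * (M:ℝ) ^ 3 :=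
      mul_le_mul_of_nonneg_right hpi3.le (by positivity)
    have hB : Real.pi * (M:ℝ) ≤ 3.15 * (M:ℝ) :=
      mul_le_mul_of_nonneg_right hpi.le hM0'.le
    linarith
  linarith
end
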